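/- arXiv:2004.02854 — 6 statements merged into one kernel-verified Lean document; each statement's English description precedes it below -/
import Mathlib

section
/- Let P be a column-stochastic primitive n×n matrix with y[t] = P^t 1 having positive entries, Q[t] = diag(y[t+1])^{-1} P diag(y[t]), and Φ(t,0) = Q[t]⋯Q[0]. Then lim_{t→∞} Φ(t,0) = (1/n) 1 1^T. -/
/-!
Since `y 0 = 1`, the product telescopes to `Φ(t,0) = diag(y (t+1))⁻¹ P^(t+1)`, whose row `i` is
row `i` of `P^(t+1)` divided by its sum. Row `i` of `P^t` is `eᵢ P^t`, and right multiplication by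
a column-stochastic matrix replaces each entry of a row vector by a convex combination of its
entries; when all entries of `P^k` are at least `δ > 0`, multiplying by `P^k` shrinks the spread
`max - min` by the factor `1 - δ`. Hence every row of `P^t` tends to a constant vector `cᵢ 1`
with `cᵢ > 0`, and the normalized rows tend to `1/n`.
-/

open Matrix Finset Filter

/-- `Phi Q s k` is the product `Q (s+k) * Q (s+k-1) * ⋯ * Q s`, i.e. `Φ(s+k, s)`. -/
def Phi {n : ℕ} (Q : ℕ → Matrix (Fin n) (Fin n) ℝ) (s : ℕ) : ℕ → Matrix (Fin n) (Fin n) ℝ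
  | 0 => Q s
  | k + 1 => Q (s + k + 1) * Phi Q s k

open Topology

theorem exists_tendsto_of_antitone_of_monotone {F G : ℕ → ℝ} (hF : Antitone F) (hG : Monotone G)
    (hGF : ∀ t, G t ≤ F t) (hgap : ∀ ε > 0, ∃ t, F t - G t < ε) :
    ∃ c, Tendsto F atTop (𝓝 c) ∧ Tendsto G atTop (𝓝 c) := by
  have hFbdd : BddBelow (Set.range F) :=
    ⟨G 0, by rintro _ ⟨t, rfl⟩; exact (hG (Nat.zero_le t)).trans (hGF t)⟩
  have hGbdd : BddAbove (Set.range G) :=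
    ⟨F 0, by rintro _ ⟨t, rfl⟩; exact (hGF t).trans (hF (Nat.zero_le t))⟩
  have hFlim := tendsto_atTop_ciInf hF hFbdd
  have hGlim := tendsto_atTop_ciSup hG hGbdd
  have hle : ⨆ t, G t ≤ ⨅ t, F t := le_of_tendsto_of_tendsto' hGlim hFlim hGF
  have hge : ⨅ t, F t ≤ ⨆ t, G t := by
    refine le_of_forall_pos_lt_add fun ε hε => ?_
    obtain ⟨t, ht⟩ := hgap ε hε
    linarith [ciInf_le hFbdd t, le_ciSup hGbdd t]
  exact ⟨_, hFlim, le_antisymm hle hge ▸ hGlim⟩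

namespace Matrix

variable {ι : Type*} [Fintype ι] [DecidableEq ι] {M : Matrix ι ι ℝ}

theorem vecMul_apply_le_iSup (hM : M ∈ colStochastic ℝ ι) (x : ι → ℝ) (j : ι) :
    (x ᵥ* M) j ≤ ⨆ i, x i :=
  calc (x ᵥ* M) j = ∑ i, x i * M i j := rfl
    _ ≤ ∑ i, (⨆ i, x i) * M i j :=
      sum_le_sum fun i _ => mul_le_mul_of_nonneg_right (le_ciSup (Finite.bddAbove_range x) i)
        (hM.1 i j)
    _ = ⨆ i, x i := by rw [← mul_sum, sum_col_of_mem_colStochastic hM, mul_one]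

theorem iInf_le_vecMul_apply (hM : M ∈ colStochastic ℝ ι) (x : ι → ℝ) (j : ι) :
    ⨅ i, x i ≤ (x ᵥ* M) j :=
  calc ⨅ i, x i = ∑ i, (⨅ i, x i) * M i j := by
        rw [← mul_sum, sum_col_of_mem_colStochastic hM, mul_one]
    _ ≤ ∑ i, x i * M i j :=
      sum_le_sum fun i _ => mul_le_mul_of_nonneg_right (ciInf_le (Finite.bddBelow_range x) i)
        (hM.1 i j)
    _ = (x ᵥ* M) j := rfl

theorem vecMul_apply_le_iSup_sub [Nonempty ι] (hM : M ∈ colStochastic ℝ ι) {δ : ℝ}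
    (hδ : ∀ i j, δ ≤ M i j) (x : ι → ℝ) (j : ι) :
    (x ᵥ* M) j ≤ (⨆ i, x i) - δ * ((⨆ i, x i) - ⨅ i, x i) := by
  obtain ⟨m, hm⟩ := exists_eq_ciInf_of_finite (f := x)
  have hS : ∀ i, 0 ≤ (⨆ i, x i) - x i := fun i =>
    sub_nonneg.2 (le_ciSup (Finite.bddAbove_range x) i)
  have hdefect : ∑ i, ((⨆ i, x i) - x i) * M i j = (⨆ i, x i) - (x ᵥ* M) j := by
    simp only [sub_mul, sum_sub_distrib, ← mul_sum, sum_col_of_mem_colStochastic hM, mul_one]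
    rfl
  have hmin : δ * ((⨆ i, x i) - x m) ≤ ∑ i, ((⨆ i, x i) - x i) * M i j :=
    calc δ * ((⨆ i, x i) - x m) ≤ ((⨆ i, x i) - x m) * M m j := by
          rw [mul_comm]; exact mul_le_mul_of_nonneg_left (hδ m j) (hS m)
      _ ≤ _ := single_le_sum (fun i _ => mul_nonneg (hS i) (hM.1 i j)) (mem_univ m)
  rw [hm] at hmin
  linarith

theorem iSup_vecMul_le [Nonempty ι] (hM : M ∈ colStochastic ℝ ι) (x : ι → ℝ) :
    ⨆ j, (x ᵥ* M) j ≤ ⨆ i, x i :=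
  ciSup_le (vecMul_apply_le_iSup hM x)

theorem iInf_le_iInf_vecMul [Nonempty ι] (hM : M ∈ colStochastic ℝ ι) (x : ι → ℝ) :
    ⨅ i, x i ≤ ⨅ j, (x ᵥ* M) j :=
  le_ciInf (iInf_le_vecMul_apply hM x)

theorem iSup_sub_iInf_vecMul_le [Nonempty ι] (hM : M ∈ colStochastic ℝ ι) {δ : ℝ}
    (hδ : ∀ i j, δ ≤ M i j) (x : ι → ℝ) :
    (⨆ j, (x ᵥ* M) j) - ⨅ j, (x ᵥ* M) j ≤ (1 - δ) * ((⨆ i, x i) - ⨅ i, x i) := by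
  have hsup := ciSup_le (vecMul_apply_le_iSup_sub hM hδ x)
  have hinf := iInf_le_iInf_vecMul hM x
  linarith

theorem iSup_sub_iInf_vecMul_pow_le [Nonempty ι] (hM : M ∈ colStochastic ℝ ι) {δ : ℝ}
    (hδ : ∀ i j, δ ≤ M i j) (x : ι → ℝ) (m : ℕ) :
    (⨆ j, (x ᵥ* M ^ m) j) - ⨅ j, (x ᵥ* M ^ m) j ≤ (1 - δ) ^ m * ((⨆ i, x i) - ⨅ i, x i) := by
  have hδ1 : δ ≤ 1 := by
    obtain ⟨i⟩ := ‹Nonempty ι›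
    exact (hδ i i).trans (le_one_of_mem_colStochastic hM)
  induction m with
  | zero => simp
  | succ m ih =>
    rw [pow_succ, ← vecMul_vecMul]
    calc _ ≤ (1 - δ) * ((⨆ j, (x ᵥ* M ^ m) j) - ⨅ j, (x ᵥ* M ^ m) j) :=
          iSup_sub_iInf_vecMul_le hM hδ _
      _ ≤ (1 - δ) * ((1 - δ) ^ m * ((⨆ i, x i) - ⨅ i, x i)) :=
          mul_le_mul_of_nonneg_left ih (sub_nonneg.2 hδ1)
      _ = (1 - δ) ^ (m + 1) * ((⨆ i, x i) - ⨅ i, x i) := by ring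

theorem exists_tendsto_vecMul_pow [Nonempty ι] (hM : M ∈ colStochastic ℝ ι) {k : ℕ}
    (hk : ∀ i j, 0 < (M ^ k) i j) (x : ι → ℝ) :
    ∃ c, (∀ t, ⨅ j, (x ᵥ* M ^ t) j ≤ c) ∧ Tendsto (fun t => x ᵥ* M ^ t) atTop (𝓝 fun _ => c) := by
  set F : ℕ → ℝ := fun t => ⨆ j, (x ᵥ* M ^ t) j
  set G : ℕ → ℝ := fun t => ⨅ j, (x ᵥ* M ^ t) j
  have hstep : ∀ t, x ᵥ* M ^ (t + 1) = (x ᵥ* M ^ t) ᵥ* M := fun t => by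
    rw [pow_succ, ← vecMul_vecMul]
  have hF : Antitone F := antitone_nat_of_succ_le fun t => by
    simp only [F, hstep]; exact iSup_vecMul_le hM _
  have hG : Monotone G := monotone_nat_of_le_succ fun t => by
    simp only [G, hstep]; exact iInf_le_iInf_vecMul hM _
  have hGF : ∀ t, G t ≤ F t := fun t =>
    (ciInf_le (Finite.bddBelow_range _) (Classical.arbitrary ι)).trans
      (le_ciSup (Finite.bddAbove_range _) _)
  obtain ⟨δ, hδpos, hδ⟩ : ∃ δ > 0, ∀ i j, δ ≤ (M ^ k) i j := by
    obtain ⟨p, hp⟩ := exists_eq_ciInf_of_finite (f := fun p : ι × ι => (M ^ k) p.1 p.2)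
    exact ⟨_, hp ▸ hk p.1 p.2, fun i j => ciInf_le (Finite.bddBelow_range _) (i, j)⟩
  have hgap : ∀ ε > 0, ∃ t, F t - G t < ε := by
    intro ε hε
    have hδ1 : δ ≤ 1 := by
      obtain ⟨i⟩ := ‹Nonempty ι›
      exact (hδ i i).trans (le_one_of_mem_colStochastic (pow_mem hM k))
    have hgeo := (tendsto_pow_atTop_nhds_zero_of_lt_one (sub_nonneg.2 hδ1)
      (sub_lt_self 1 hδpos)).mul_const (F 0 - G 0)
    rw [zero_mul] at hgeo
    obtain ⟨m, hm⟩ := (hgeo.eventually (gt_mem_nhds hε)).exists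
    refine ⟨k * m, lt_of_le_of_lt ?_ hm⟩
    simpa only [F, G, pow_mul, pow_zero, vecMul_one] using
      iSup_sub_iInf_vecMul_pow_le (pow_mem hM k) hδ x m
  obtain ⟨c, hFc, hGc⟩ := exists_tendsto_of_antitone_of_monotone hF hG hGF hgap
  refine ⟨c, hG.ge_of_tendsto hGc, tendsto_pi_nhds.2 fun j => ?_⟩
  exact tendsto_of_tendsto_of_tendsto_of_le_of_le hGc hFc
    (fun t => ciInf_le (Finite.bddBelow_range _) j) fun t => le_ciSup (Finite.bddAbove_range _) j

theorem exists_pos_tendsto_pow_apply (hM : M ∈ colStochastic ℝ ι) {k : ℕ}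
    (hk : ∀ i j, 0 < (M ^ k) i j) (i : ι) :
    ∃ c > 0, ∀ j, Tendsto (fun t => (M ^ t) i j) atTop (𝓝 c) := by
  have : Nonempty ι := ⟨i⟩
  obtain ⟨c, hlow, hlim⟩ := exists_tendsto_vecMul_pow hM hk (Pi.single i 1)
  simp only [single_one_vecMul] at hlow hlim
  obtain ⟨j, hj⟩ := exists_eq_ciInf_of_finite (f := (M ^ k) i)
  exact ⟨c, (hk i j).trans_le (hj ▸ hlow k), tendsto_pi_nhds.1 hlim⟩

end Matrix

theorem tendsto_inv_sum_mul_of_tendsto {ι α : Type*} [Fintype ι] {l : Filter α} {v : α → ι → ℝ}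
    {c : ℝ} (hc : c ≠ 0) (hv : ∀ i, Tendsto (fun a => v a i) l (𝓝 c)) (j : ι) :
    Tendsto (fun a => (∑ i, v a i)⁻¹ * v a j) l (𝓝 (1 / Fintype.card ι)) := by
  have hsum : Tendsto (fun a => ∑ i, v a i) l (𝓝 (Fintype.card ι * c)) := by
    simpa using tendsto_finsetSum univ fun i _ => hv i
  have hcard : (Fintype.card ι : ℝ) ≠ 0 := by
    have : Nonempty ι := ⟨j⟩
    exact Nat.cast_ne_zero.2 Fintype.card_ne_zero
  convert (hsum.inv₀ (mul_ne_zero hcard hc)).mul (hv j) using 2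
  field_simp

theorem Phi_eq_diagonal_mul_pow_mul_diagonal {n : ℕ} {P : Matrix (Fin n) (Fin n) ℝ}
    {w : ℕ → Fin n → ℝ} {Q : ℕ → Matrix (Fin n) (Fin n) ℝ} (hw : ∀ t i, w t i ≠ 0)
    (hQ : ∀ t, Q t = diagonal (fun i => (w (t + 1) i)⁻¹) * P * diagonal (w t)) (s t : ℕ) :
    Phi Q s t = diagonal (fun i => (w (s + t + 1) i)⁻¹) * P ^ (t + 1) * diagonal (w s) := by
  induction t with
  | zero => rw [Phi, hQ, pow_one]
  | succ t ih =>
    have hcancel : diagonal (w (s + t + 1)) * diagonal (fun i => (w (s + t + 1) i)⁻¹) = 1 := by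
      rw [diagonal_mul_diagonal, ← diagonal_one]
      exact congrArg diagonal (funext fun i => mul_inv_cancel₀ (hw _ i))
    calc Phi Q s (t + 1)
        = diagonal (fun i => (w (s + t + 1 + 1) i)⁻¹) * P
          * (diagonal (w (s + t + 1)) * diagonal (fun i => (w (s + t + 1) i)⁻¹))
          * P ^ (t + 1) * diagonal (w s) := by rw [Phi, ih, hQ]; simp only [mul_assoc]
      _ = _ := by rw [hcancel, mul_one, mul_assoc _ P, ← pow_succ', ← add_assoc s t 1]

theorem stmt_3 {n : ℕ} (P : Matrix (Fin n) (Fin n) ℝ)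
    (hnonneg : ∀ i j, 0 ≤ P i j)
    (hcol : ∀ j, ∑ i, P i j = 1)
    (hprim : ∃ k : ℕ, ∀ i j, 0 < (P ^ k) i j)
    (y : ℕ → Fin n → ℝ)
    (hy : ∀ t, y t = (P ^ t) *ᵥ (fun _ => (1 : ℝ)))
    (hypos : ∀ t i, 0 < y t i)
    (Q : ℕ → Matrix (Fin n) (Fin n) ℝ)
    (hQ : ∀ t, Q t = Matrix.diagonal (fun i => (y (t + 1) i)⁻¹) * P * Matrix.diagonal (y t)) :
    Tendsto (fun t => Phi Q 0 t) atTop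
      (nhds (Matrix.of fun _ _ => (1 : ℝ) / n)) := by
  obtain ⟨k, hk⟩ := hprim
  have hP : P ∈ colStochastic ℝ (Fin n) := mem_colStochastic_iff_sum.2 ⟨hnonneg, hcol⟩
  have hrow : ∀ t i, y t i = ∑ j, (P ^ t) i j := fun t i => by
    simp [hy, mulVec, dotProduct]
  have hPhi : ∀ t, Phi Q 0 t = diagonal (fun i => (y (t + 1) i)⁻¹) * P ^ (t + 1) := fun t => by
    rw [Phi_eq_diagonal_mul_pow_mul_diagonal (fun t i => (hypos t i).ne') hQ, zero_add, hy 0,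
      pow_zero, one_mulVec, diagonal_one, mul_one]
  refine tendsto_pi_nhds.2 fun i => tendsto_pi_nhds.2 fun j => ?_
  obtain ⟨c, hc, hlim⟩ := exists_pos_tendsto_pow_apply hP hk i
  simpa [hPhi, diagonal_mul, hrow] using
    tendsto_inv_sum_mul_of_tendsto hc.ne' (fun j => (hlim j).comp (tendsto_add_atTop_nat 1)) j
end

section
/- Under the push-sum setup (P column-stochastic primitive, y[t] = P^t 1 positive, Q[t] = diag(y[t+1])^{-1} P diag(y[t]), Φ(t,s) the product Q[t]⋯Q[s]), there exist constants C > 0 and λ ∈ (0,1) such that for all i,j ∈ [n] and all t ≥ 0: |Φ(t,0)_{ij} − (1/n) Σ_{k=1}^n Φ(t,0)_{kj}| ≤ C λ^t. -/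
/-!
Since `y 0 = 1`, `Φ(t, 0) = diag(y (t+1))⁻¹ P^(t+1)` is row-stochastic, so each column of it
deviates from its average by at most its spread (max minus min). Choose `T` with `P^(T+1)`
entrywise at least `ε > 0`. The weights satisfy `ε n ≤ y s ≤ n` once `s ≥ T + 1`, so every window
`Φ(s+T, s) = diag(y (s+T+1))⁻¹ P^(T+1) diag(y s)` with `s ≥ T + 1` is row-stochastic with entries
at least `ε²`. Multiplying by such a matrix shrinks the spread of every column by the factor
`1 - 2δ` for any `δ ≤ ε²`; with `δ = min ε² (1/4)` this factor lies in `(0, 1)`, and the spreads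
decay geometrically with rate `(1 - 2δ)^(1/(T+1))`.
-/

open Matrix Finset

section Spread

variable {ι : Type*} [Fintype ι] [Nonempty ι]

def spread (v : ι → ℝ) : ℝ :=
  univ.sup' univ_nonempty v - univ.inf' univ_nonempty v

lemma univ_inf'_le (v : ι → ℝ) (i : ι) : univ.inf' univ_nonempty v ≤ v i :=
  inf'_le v (mem_univ i)

lemma le_univ_sup' (v : ι → ℝ) (i : ι) : v i ≤ univ.sup' univ_nonempty v :=
  le_sup' v (mem_univ i)

lemma spread_le {v : ι → ℝ} {a b : ℝ} (h : ∀ i, a ≤ v i ∧ v i ≤ b) : spread v ≤ b - a :=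
  sub_le_sub (sup'_le _ _ fun i _ => (h i).2) (le_inf' _ _ fun i _ => (h i).1)

lemma abs_sub_average_le_spread (v : ι → ℝ) (i : ι) :
    |v i - (1 / Fintype.card ι) * ∑ k, v k| ≤ spread v := by
  have hcard : (0 : ℝ) < Fintype.card ι := Nat.cast_pos.2 Fintype.card_pos
  have hsup : (∑ k, v k) / Fintype.card ι ≤ univ.sup' univ_nonempty v :=
    (div_le_iff₀' hcard).2 <| by simpa using sum_le_card_nsmul univ v _ fun k _ => le_univ_sup' v k
  have hinf : univ.inf' univ_nonempty v ≤ (∑ k, v k) / Fintype.card ι :=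
    (le_div_iff₀' hcard).2 <| by simpa using card_nsmul_le_sum univ v _ fun k _ => univ_inf'_le v k
  rw [one_div_mul_eq_div, spread, abs_sub_le_iff]
  constructor <;> linarith [univ_inf'_le v i, le_univ_sup' v i]

/-- Averaging with weights at least `δ` moves every entry at least `δ * spread v` away from both
`max v` and `min v`. -/
lemma spread_mulVec_le [DecidableEq ι] {A : Matrix ι ι ℝ} (hA : A ∈ rowStochastic ℝ ι) {δ : ℝ}
    (hδ : ∀ i l, δ ≤ A i l) (v : ι → ℝ) : spread (A *ᵥ v) ≤ (1 - 2 * δ) * spread v := by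
  set M := univ.sup' univ_nonempty v
  set m := univ.inf' univ_nonempty v
  obtain ⟨lM, -, hlM⟩ := exists_mem_eq_sup' univ_nonempty v
  obtain ⟨lm, -, hlm⟩ := exists_mem_eq_inf' univ_nonempty v
  have hrow := sum_row_of_mem_rowStochastic hA
  have weight_ge (i : ι) (w : ι → ℝ) (hw : ∀ l, 0 ≤ w l) (l₀ : ι) : δ * w l₀ ≤ ∑ l, A i l * w l :=
    (mul_le_mul_of_nonneg_right (hδ i l₀) (hw l₀)).trans <|
      single_le_sum
        (fun l _ => mul_nonneg (nonneg_of_mem_rowStochastic hA (i := i) (j := l)) (hw l))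
        (mem_univ l₀)
  have upper (i : ι) : (A *ᵥ v) i ≤ M - δ * (M - m) := by
    have h := weight_ge i (fun l => M - v l) (fun l => sub_nonneg.2 (le_univ_sup' v l)) lm
    simp only [mul_sub, sum_sub_distrib, ← sum_mul, hrow, one_mul, ← hlm] at h
    simp only [mulVec, dotProduct]
    linarith
  have lower (i : ι) : m + δ * (M - m) ≤ (A *ᵥ v) i := by
    have h := weight_ge i (fun l => v l - m) (fun l => sub_nonneg.2 (univ_inf'_le v l)) lM
    simp only [mul_sub, sum_sub_distrib, ← sum_mul, hrow, one_mul, ← hlM] at h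
    simp only [mulVec, dotProduct]
    linarith
  calc spread (A *ᵥ v) ≤ (M - δ * (M - m)) - (m + δ * (M - m)) :=
        spread_le fun i => ⟨lower i, upper i⟩
    _ = (1 - 2 * δ) * spread v := by rw [spread]; ring

end Spread

lemma exists_geometric_bound {T : ℕ} (hT : 0 < T) (T₀ : ℕ) {r : ℝ} (hr0 : 0 < r) (hr1 : r < 1)
    {B : ℝ} (hB : 0 < B) :
    ∃ C lam : ℝ, 0 < C ∧ 0 < lam ∧ lam < 1 ∧ ∀ f : ℕ → ℝ, (∀ u, f u ≤ B) →
      (∀ u ≥ T₀, f (u + T) ≤ r * f u) → ∀ t, f t ≤ C * lam ^ t := by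
  set lam := r ^ ((T : ℝ)⁻¹)
  have hlam0 : 0 < lam := Real.rpow_pos_of_pos hr0 _
  have hlam1 : lam < 1 := Real.rpow_lt_one hr0.le hr1 (by positivity)
  have hlamT : lam ^ T = r := Real.rpow_inv_natCast_pow hr0.le hT.ne'
  refine ⟨B / lam ^ (T₀ + T), lam, by positivity, hlam0, hlam1, fun f hfB hf t => ?_⟩
  have hdecay (q : ℕ) : ∀ t, q * T ≤ t → f (T₀ + t) ≤ B * r ^ q := by
    induction q with
    | zero => simpa using fun t => hfB (T₀ + t)
    | succ q ih =>
      intro t ht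
      obtain ⟨t', rfl⟩ := Nat.exists_eq_add_of_le' ((Nat.le_mul_of_pos_left T q.succ_pos).trans ht)
      have hqt' : q * T ≤ t' := by rw [Nat.succ_mul] at ht; omega
      calc f (T₀ + (t' + T)) = f (T₀ + t' + T) := by rw [add_assoc]
        _ ≤ r * f (T₀ + t') := hf _ (Nat.le_add_right _ _)
        _ ≤ r * (B * r ^ q) := mul_le_mul_of_nonneg_left (ih t' hqt') hr0.le
        _ = B * r ^ (q + 1) := by ring
  obtain ⟨m, hfm, htm⟩ : ∃ m, f t ≤ B * lam ^ m ∧ t ≤ m + (T₀ + T) := by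
    rcases lt_or_ge t T₀ with ht | ht
    · exact ⟨0, by simpa using hfB t, by omega⟩
    · obtain ⟨t', rfl⟩ := Nat.exists_eq_add_of_le ht
      refine ⟨t' / T * T, ?_, by linarith [Nat.lt_div_mul_add (a := t') hT]⟩
      rw [pow_mul', hlamT]
      exact hdecay _ t' (Nat.div_mul_le_self t' T)
  calc f t ≤ B * lam ^ m := hfm
    _ = B / lam ^ (T₀ + T) * lam ^ (m + (T₀ + T)) := by
        field_simp; ring
    _ ≤ B / lam ^ (T₀ + T) * lam ^ t :=
        mul_le_mul_of_nonneg_left (pow_le_pow_of_le_one hlam0.le hlam1.le htm) (by positivity)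

lemma pow_succ_pos_of_mem_colStochastic {ι : Type*} [Fintype ι] [DecidableEq ι]
    {P : Matrix ι ι ℝ} (hP : P ∈ colStochastic ℝ ι) {k : ℕ} (hk : ∀ i j, 0 < (P ^ k) i j)
    (i j : ι) : 0 < (P ^ (k + 1)) i j := by
  obtain ⟨l, -, hl⟩ := exists_ne_zero_of_sum_ne_zero
    ((sum_col_of_mem_colStochastic hP j).trans_ne one_ne_zero)
  rw [pow_succ, mul_apply]
  exact sum_pos' (fun l _ => mul_nonneg (hk i l).le (nonneg_of_mem_colStochastic hP))
    ⟨l, mem_univ l, mul_pos (hk i l) ((nonneg_of_mem_colStochastic hP).lt_of_ne' hl)⟩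

section Phi

variable {n : ℕ} {Q : ℕ → Matrix (Fin n) (Fin n) ℝ}

lemma Phi_mem {S : Submonoid (Matrix (Fin n) (Fin n) ℝ)} (hS : ∀ t, Q t ∈ S) (s : ℕ) :
    ∀ k, Phi Q s k ∈ S
  | 0 => hS s
  | k + 1 => S.mul_mem (hS _) (Phi_mem hS s k)

lemma Phi_add_succ (s k : ℕ) : ∀ m, Phi Q s (k + m + 1) = Phi Q (s + k + 1) m * Phi Q s k
  | 0 => rfl
  | m + 1 => by
    rw [← add_assoc, Phi, Phi_add_succ s k m, Phi, Matrix.mul_assoc]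
    congr 3
    omega

lemma spread_col_Phi_add_succ_le {s k m : ℕ} (hA : Phi Q (s + k + 1) m ∈ rowStochastic ℝ (Fin n))
    {δ : ℝ} (hδ : ∀ i l, δ ≤ Phi Q (s + k + 1) m i l) [Nonempty (Fin n)] (j : Fin n) :
    spread (fun i => Phi Q s (k + m + 1) i j) ≤ (1 - 2 * δ) * spread (fun i => Phi Q s k i j) := by
  rw [Phi_add_succ]
  exact spread_mulVec_le hA hδ _

end Phi

namespace PushSum

variable {n : ℕ} {P : Matrix (Fin n) (Fin n) ℝ} {y : ℕ → Fin n → ℝ}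
  {Q : ℕ → Matrix (Fin n) (Fin n) ℝ}

lemma Phi_eq_diagonal_mul_pow_mul_diagonal (hy0 : ∀ t i, y t i ≠ 0)
    (hQ : ∀ t, Q t = diagonal (fun i => (y (t + 1) i)⁻¹) * P * diagonal (y t)) (s : ℕ) :
    ∀ k, Phi Q s k = diagonal (fun i => (y (s + k + 1) i)⁻¹) * P ^ (k + 1) * diagonal (y s)
  | 0 => by rw [Phi, hQ, zero_add, pow_one]
  | k + 1 => by
    have hcancel : diagonal (y (s + k + 1)) * diagonal (fun i => (y (s + k + 1) i)⁻¹) = 1 := by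
      rw [diagonal_mul_diagonal, ← diagonal_one]
      exact congrArg diagonal (funext fun i => mul_inv_cancel₀ (hy0 _ i))
    rw [Phi, Phi_eq_diagonal_mul_pow_mul_diagonal hy0 hQ s k, hQ]
    simp only [Matrix.mul_assoc]
    rw [← Matrix.mul_assoc (diagonal (y _)), hcancel, Matrix.one_mul, ← Matrix.mul_assoc P,
      ← pow_succ']
    rfl

lemma weight_add (hy : ∀ t, y t = P ^ t *ᵥ fun _ => 1) (s k : ℕ) : y (s + k) = P ^ k *ᵥ y s := by
  rw [hy, hy, mulVec_mulVec, ← pow_add, add_comm]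

lemma sum_weight (hP : P ∈ colStochastic ℝ (Fin n)) (hy : ∀ t, y t = P ^ t *ᵥ fun _ => 1)
    (t : ℕ) : ∑ i, y t i = n := by
  rw [hy, sum_mulVec_of_mem_colStochastic (pow_mem hP t)]
  simp

lemma weight_le_card (hP : P ∈ colStochastic ℝ (Fin n)) (hy : ∀ t, y t = P ^ t *ᵥ fun _ => 1)
    (hypos : ∀ t i, 0 < y t i) (t : ℕ) (i : Fin n) : y t i ≤ n :=
  sum_weight hP hy t ▸ single_le_sum (fun k _ => (hypos t k).le) (mem_univ i)

lemma mul_card_le_weight (hP : P ∈ colStochastic ℝ (Fin n)) (hy : ∀ t, y t = P ^ t *ᵥ fun _ => 1)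
    (hypos : ∀ t i, 0 < y t i) {K : ℕ} {ε : ℝ} (hε : ∀ i j, ε ≤ (P ^ K) i j) {t : ℕ} (ht : K ≤ t)
    (i : Fin n) : ε * n ≤ y t i := by
  obtain ⟨s, rfl⟩ := Nat.exists_eq_add_of_le' ht
  calc ε * n = ∑ l, ε * y s l := by rw [← mul_sum, sum_weight hP hy]
    _ ≤ ∑ l, (P ^ K) i l * y s l :=
        sum_le_sum fun l _ => mul_le_mul_of_nonneg_right (hε i l) (hypos s l).le
    _ = y (s + K) i := by rw [weight_add hy]; rfl

lemma step_mem_rowStochastic (hnonneg : ∀ i j, 0 ≤ P i j) (hy : ∀ t, y t = P ^ t *ᵥ fun _ => 1)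
    (hypos : ∀ t i, 0 < y t i)
    (hQ : ∀ t, Q t = diagonal (fun i => (y (t + 1) i)⁻¹) * P * diagonal (y t)) (t : ℕ) :
    Q t ∈ rowStochastic ℝ (Fin n) := by
  refine mem_rowStochastic.2 ⟨fun i j => ?_, ?_⟩
  · rw [hQ, mul_diagonal, diagonal_mul]
    exact mul_nonneg (mul_nonneg (inv_pos.2 (hypos _ i)).le (hnonneg i j)) (hypos t j).le
  · have hPy : P *ᵥ y t = y (t + 1) := by rw [weight_add hy t 1, pow_one]
    have hD : diagonal (y t) *ᵥ 1 = y t := funext fun j => by simp [mulVec_diagonal]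
    ext i
    rw [hQ, ← mulVec_mulVec, ← mulVec_mulVec, hD, hPy, mulVec_diagonal]
    exact inv_mul_cancel₀ (hypos _ i).ne'

lemma sq_le_Phi_apply (hP : P ∈ colStochastic ℝ (Fin n)) (hy : ∀ t, y t = P ^ t *ᵥ fun _ => 1)
    (hypos : ∀ t i, 0 < y t i)
    (hQ : ∀ t, Q t = diagonal (fun i => (y (t + 1) i)⁻¹) * P * diagonal (y t))
    {k : ℕ} {ε : ℝ} (hε0 : 0 ≤ ε) (hε : ∀ i j, ε ≤ (P ^ (k + 1)) i j) {s : ℕ} (hs : k + 1 ≤ s)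
    (i j : Fin n) : ε ^ 2 ≤ Phi Q s k i j := by
  have hentry : Phi Q s k i j = (P ^ (k + 1)) i j * y s j / y (s + k + 1) i := by
    rw [Phi_eq_diagonal_mul_pow_mul_diagonal (fun t i => (hypos t i).ne') hQ, mul_diagonal,
      diagonal_mul]
    ring
  rw [hentry, le_div_iff₀ (hypos _ i)]
  calc ε ^ 2 * y (s + k + 1) i ≤ ε * (ε * n) := by
        rw [sq, mul_assoc]
        exact mul_le_mul_of_nonneg_left
          (mul_le_mul_of_nonneg_left (weight_le_card hP hy hypos _ i) hε0) hε0
    _ ≤ (P ^ (k + 1)) i j * y s j :=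
        mul_le_mul (hε i j) (mul_card_le_weight hP hy hypos hε hs j) (by positivity)
          ((pow_mem hP _).1 i j)

end PushSum

theorem stmt_5 {n : ℕ} (P : Matrix (Fin n) (Fin n) ℝ)
    (hnonneg : ∀ i j, 0 ≤ P i j)
    (hcol : ∀ j, ∑ i, P i j = 1)
    (hprim : ∃ k : ℕ, ∀ i j, 0 < (P ^ k) i j)
    (y : ℕ → Fin n → ℝ)
    (hy : ∀ t, y t = (P ^ t) *ᵥ (fun _ => (1 : ℝ)))
    (hypos : ∀ t i, 0 < y t i)
    (Q : ℕ → Matrix (Fin n) (Fin n) ℝ)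
    (hQ : ∀ t, Q t = Matrix.diagonal (fun i => (y (t + 1) i)⁻¹) * P * Matrix.diagonal (y t)) :
    ∃ C : ℝ, ∃ lam : ℝ, 0 < C ∧ 0 < lam ∧ lam < 1 ∧
      ∀ (t : ℕ) (i j : Fin n),
        |Phi Q 0 t i j - (1 / n) * ∑ k, Phi Q 0 t k j| ≤ C * lam ^ t := by
  have hP : P ∈ colStochastic ℝ (Fin n) := mem_colStochastic_iff_sum.2 ⟨hnonneg, hcol⟩
  obtain ⟨T, hT⟩ := hprim
  obtain ⟨ε, hε0, hε⟩ := Pi.exists_forall_pos_add_lt (x := 0)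
    (y := fun p : Fin n × Fin n => (P ^ (T + 1)) p.1 p.2)
    fun p => pow_succ_pos_of_mem_colStochastic hP hT p.1 p.2
  set δ := min (ε ^ 2) (1 / 4)
  have hδ0 : 0 < δ := lt_min (by positivity) (by norm_num)
  have hδ1 : δ ≤ 1 / 4 := min_le_right _ _
  obtain ⟨C, lam, hC, hlam0, hlam1, hbound⟩ :=
    exists_geometric_bound T.succ_pos T (r := 1 - 2 * δ) (by linarith) (by linarith) one_pos
  refine ⟨C, lam, hC, hlam0, hlam1, fun t i j => ?_⟩
  have : Nonempty (Fin n) := ⟨i⟩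
  have hΦ := Phi_mem (PushSum.step_mem_rowStochastic hnonneg hy hypos hQ)
  calc |Phi Q 0 t i j - (1 / n) * ∑ k, Phi Q 0 t k j| ≤ spread fun k => Phi Q 0 t k j := by
        simpa using abs_sub_average_le_spread (fun k => Phi Q 0 t k j) i
    _ ≤ C * lam ^ t := by
      refine hbound (fun u => spread fun k => Phi Q 0 u k j) (fun u => ?_) (fun u hu => ?_) t
      · simpa using spread_le fun k =>
          ⟨nonneg_of_mem_rowStochastic (hΦ 0 u), le_one_of_mem_rowStochastic (hΦ 0 u)⟩
      · have hwindow (k l : Fin n) : δ ≤ Phi Q (0 + u + 1) T k l :=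
          (min_le_left _ _).trans <| PushSum.sq_le_Phi_apply hP hy hypos hQ hε0.le
            (fun a b => (zero_add ε ▸ hε (a, b)).le) (by omega) k l
        exact spread_col_Phi_add_succ_le (hΦ _ T) hwindow j
end

section
/- Under the push-sum setup, there exist constants C > 0 and λ ∈ (0,1) such that for all i,j ∈ [n] and all 0 ≤ s < t: |Φ(t,s)_{ij} − (1/n) Σ_{k=1}^n Φ(t,s)_{kj}| ≤ C λ^{t−s}. -/
open Matrix Finset

lemma osc_contract {n : ℕ} (hn : (univ : Finset (Fin n)).Nonempty)
    (A : Matrix (Fin n) (Fin n) ℝ) (x : Fin n → ℝ) (δ : ℝ)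
    (hδ : ∀ i l, δ ≤ A i l) (hrow : ∀ i, ∑ l, A i l = 1) :
    (univ.sup' hn (A *ᵥ x)) - (univ.inf' hn (A *ᵥ x))
      ≤ (1 - n * δ) * ((univ.sup' hn x) - (univ.inf' hn x)) := by
  obtain ⟨i0, -, hi0⟩ := Finset.exists_mem_eq_sup' hn (A *ᵥ x)
  obtain ⟨j0, -, hj0⟩ := Finset.exists_mem_eq_inf' hn (A *ᵥ x)
  rw [hi0, hj0]
  set S := univ.sup' hn x with hS
  set I := univ.inf' hn x with hI
  have hxS : ∀ l, x l ≤ S := fun l => Finset.le_sup' x (mem_univ l)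
  have hxI : ∀ l, I ≤ x l := fun l => Finset.inf'_le x (mem_univ l)
  have key : ∀ i, (A *ᵥ x) i = (∑ l, (A i l - δ) * x l) + δ * ∑ l, x l := by
    intro i
    simp only [Matrix.mulVec, dotProduct, sub_mul, Finset.sum_sub_distrib, Finset.mul_sum]
    ring
  have h1 : ∑ l, (A i0 l - δ) * x l ≤ (1 - n * δ) * S := by
    calc ∑ l, (A i0 l - δ) * x l ≤ ∑ l : Fin n, (A i0 l - δ) * S := by
          apply Finset.sum_le_sum
          intro l _
          exact mul_le_mul_of_nonneg_left (hxS l) (by linarith [hδ i0 l])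
      _ = (1 - n * δ) * S := by
          rw [← Finset.sum_mul]
          congr 1
          rw [Finset.sum_sub_distrib, hrow i0]
          simp [mul_comm]
  have h2 : (1 - n * δ) * I ≤ ∑ l, (A j0 l - δ) * x l := by
    calc ∑ l, (A j0 l - δ) * x l ≥ ∑ l : Fin n, (A j0 l - δ) * I := by
          apply Finset.sum_le_sum
          intro l _
          exact mul_le_mul_of_nonneg_left (hxI l) (by linarith [hδ j0 l])
      _ = (1 - n * δ) * I := by
          rw [← Finset.sum_mul]
          congr 1
          rw [Finset.sum_sub_distrib, hrow j0]
          simp [mul_comm]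
  rw [key i0, key j0, mul_sub]
  linarith

lemma aux_half (th a : ℝ) (hth : 1/2 ≤ th) (ha : 0 < a) : a / th ≤ 2 * a := by
  have h0 : (0:ℝ) < th := by linarith
  rw [div_le_iff₀ h0]
  nlinarith

lemma phi_apply {n : ℕ} (P : Matrix (Fin n) (Fin n) ℝ) (y : ℕ → Fin n → ℝ)
    (hypos : ∀ t i, 0 < y t i)
    (Q : ℕ → Matrix (Fin n) (Fin n) ℝ)
    (hQ : ∀ t, Q t = Matrix.diagonal (fun i => (y (t + 1) i)⁻¹) * P * Matrix.diagonal (y t)) :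
    ∀ s k i j, Phi Q s k i j = (y (s + k + 1) i)⁻¹ * (P ^ (k + 1)) i j * y s j := by
  intro s k
  induction k with
  | zero =>
    intro i j
    show Q s i j = _
    rw [hQ, Matrix.mul_diagonal, Matrix.diagonal_mul, pow_one]
  | succ k ih =>
    intro i j
    show (Q (s + k + 1) * Phi Q s k) i j = _
    rw [Matrix.mul_apply]
    have hQe : ∀ i l, Q (s+k+1) i l = (y (s+k+1+1) i)⁻¹ * P i l * y (s+k+1) l := by
      intro i l; rw [hQ, Matrix.mul_diagonal, Matrix.diagonal_mul]
    have key : ∀ l, Q (s+k+1) i l * Phi Q s k l j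
        = (y (s+k+1+1) i)⁻¹ * (P i l * (P ^ (k+1)) l j) * y s j := by
      intro l
      rw [hQe, ih]
      have h1 : y (s+k+1) l ≠ 0 := ne_of_gt (hypos _ _)
      calc (y (s+k+1+1) i)⁻¹ * P i l * y (s+k+1) l * ((y (s+k+1) l)⁻¹ * (P ^ (k+1)) l j * y s j)
          = (y (s+k+1+1) i)⁻¹ * (P i l * (P ^ (k+1)) l j) * y s j * (y (s+k+1) l * (y (s+k+1) l)⁻¹) := by ring
        _ = (y (s+k+1+1) i)⁻¹ * (P i l * (P ^ (k+1)) l j) * y s j := by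
            rw [mul_inv_cancel₀ h1, mul_one]
    calc ∑ l, Q (s+k+1) i l * Phi Q s k l j
        = ∑ l, (y (s+k+1+1) i)⁻¹ * (P i l * (P ^ (k+1)) l j) * y s j :=
          Finset.sum_congr rfl fun l _ => key l
      _ = (y (s+k+1+1) i)⁻¹ * (∑ l, P i l * (P ^ (k+1)) l j) * y s j := by
          rw [← Finset.sum_mul, ← Finset.mul_sum]
      _ = (y (s + (k+1) + 1) i)⁻¹ * (P ^ (k + 1 + 1)) i j * y s j := by
          rw [pow_succ' P (k+1), Matrix.mul_apply]
          have e : s + (k+1) + 1 = s + k + 1 + 1 := by omega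
          rw [e]

lemma colsum_pow {n : ℕ} (P : Matrix (Fin n) (Fin n) ℝ)
    (hcol : ∀ j, ∑ i, P i j = 1) :
    ∀ t j, ∑ i, (P ^ t) i j = 1 := by
  intro t
  induction t with
  | zero => intro j; simp [Matrix.one_apply]
  | succ t ih =>
    intro j
    rw [pow_succ]
    simp only [Matrix.mul_apply]
    rw [Finset.sum_comm]
    calc ∑ l, ∑ i, (P ^ t) i l * P l j
        = ∑ l, (∑ i, (P ^ t) i l) * P l j := by
          simp [Finset.sum_mul]
      _ = ∑ l, P l j := by simp [ih]
      _ = 1 := hcol j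

lemma pow_nonneg_entry {n : ℕ} (P : Matrix (Fin n) (Fin n) ℝ)
    (hnonneg : ∀ i j, 0 ≤ P i j) :
    ∀ t i j, 0 ≤ (P ^ t) i j := by
  intro t
  induction t with
  | zero => intro i j; rcases eq_or_ne i j with h|h <;> simp [Matrix.one_apply, h]
  | succ t ih =>
    intro i j
    rw [pow_succ, Matrix.mul_apply]
    exact Finset.sum_nonneg fun l _ => mul_nonneg (ih i l) (hnonneg l j)

lemma pow_pos_of_ge {n : ℕ} (P : Matrix (Fin n) (Fin n) ℝ)
    (hnonneg : ∀ i j, 0 ≤ P i j) (hcol : ∀ j, ∑ i, P i j = 1)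
    (k : ℕ) (hk : ∀ i j, 0 < (P ^ k) i j) :
    ∀ m, k ≤ m → ∀ i j, 0 < (P ^ m) i j := by
  intro m hm
  induction m, hm using Nat.le_induction with
  | base => exact hk
  | succ m hm ih =>
    intro i j
    rw [pow_succ, Matrix.mul_apply]
    have hcolj : ∃ l, 0 < P l j := by
      by_contra h
      push_neg at h
      have : ∑ i, P i j ≤ 0 := Finset.sum_nonpos fun l _ => h l
      rw [hcol j] at this; linarith
    obtain ⟨l0, hl0⟩ := hcolj
    apply Finset.sum_pos' (fun l _ => mul_nonneg (le_of_lt (ih i l)) (hnonneg l j))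
    exact ⟨l0, mem_univ l0, mul_pos (ih i l0) hl0⟩

theorem stmt_6 {n : ℕ} (P : Matrix (Fin n) (Fin n) ℝ)
    (hnonneg : ∀ i j, 0 ≤ P i j)
    (hcol : ∀ j, ∑ i, P i j = 1)
    (hprim : ∃ k : ℕ, ∀ i j, 0 < (P ^ k) i j)
    (y : ℕ → Fin n → ℝ)
    (hy : ∀ t, y t = (P ^ t) *ᵥ (fun _ => (1 : ℝ)))
    (hypos : ∀ t i, 0 < y t i)
    (Q : ℕ → Matrix (Fin n) (Fin n) ℝ)
    (hQ : ∀ t, Q t = Matrix.diagonal (fun i => (y (t + 1) i)⁻¹) * P * Matrix.diagonal (y t)) :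
    ∃ C : ℝ, ∃ lam : ℝ, 0 < C ∧ 0 < lam ∧ lam < 1 ∧
      ∀ (s t : ℕ), s < t → ∀ (i j : Fin n),
        |Phi Q s (t - s) i j - (1 / n) * ∑ k, Phi Q s (t - s) k j| ≤ C * lam ^ (t - s) := by
  rcases Nat.eq_zero_or_pos n with hn0 | hn
  · exact ⟨1, 1/2, one_pos, by norm_num, by norm_num,
      fun s t _ i j => absurd i.isLt (by omega)⟩
  have he : (univ : Finset (Fin n)).Nonempty := ⟨⟨0, hn⟩, mem_univ _⟩
  have hn0' : (0:ℝ) < n := by exact_mod_cast hn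
  obtain ⟨k₀, hk₀⟩ := hprim
  set m := k₀ + 1 with hmdef
  have hm : 0 < m := Nat.succ_pos _
  have hmr : (0:ℝ) < m := by exact_mod_cast hm
  have hPm : ∀ i j, 0 < (P ^ m) i j :=
    pow_pos_of_ge P hnonneg hcol k₀ hk₀ m (Nat.le_succ _)
  -- minimum entry of P^m
  set ε : ℝ := univ.inf' he fun i => univ.inf' he fun l => (P ^ m) i l with hεdef
  have hε : 0 < ε := by
    rw [hεdef, Finset.lt_inf'_iff]
    intro i _
    rw [Finset.lt_inf'_iff]
    intro l _
    exact hPm i l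
  have hεle : ∀ i l, ε ≤ (P ^ m) i l := by
    intro i l
    exact le_trans (Finset.inf'_le _ (mem_univ i)) (Finset.inf'_le _ (mem_univ l))
  -- y recursions and bounds
  have hyrec : ∀ a r i, y (a + r) i = ∑ l, (P ^ r) i l * y a l := by
    intro a r i
    have h1 : y (a + r) = (P ^ r) *ᵥ (y a) := by
      rw [hy, hy, Nat.add_comm a r, pow_add, ← Matrix.mulVec_mulVec]
    rw [h1]
    simp [Matrix.mulVec, dotProduct]
  have hysum : ∀ t, ∑ i, y t i = n := by
    intro t
    have h1 : ∀ i, y t i = ∑ j, (P ^ t) i j := by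
      intro i; rw [hy]; simp [Matrix.mulVec, dotProduct]
    calc ∑ i, y t i = ∑ i, ∑ j, (P ^ t) i j := by simp [h1]
      _ = ∑ j, ∑ i, (P ^ t) i j := Finset.sum_comm
      _ = ∑ _j : Fin n, (1:ℝ) := by simp [colsum_pow P hcol]
      _ = n := by simp
  have hyub : ∀ t i, y t i ≤ n := by
    intro t i
    calc y t i ≤ ∑ k, y t k :=
          Finset.single_le_sum (fun k _ => (hypos t k).le) (mem_univ i)
      _ = n := hysum t
  -- uniform lower bound on y
  have hpe : ((Finset.range m) ×ˢ (univ : Finset (Fin n))).Nonempty :=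
    ⟨(0, ⟨0, hn⟩), by simp [Finset.mem_product, hm]⟩
  set c₁ : ℝ := ((Finset.range m) ×ˢ (univ : Finset (Fin n))).inf' hpe (fun p => y p.1 p.2) with hc₁def
  set c : ℝ := min c₁ (ε * n) with hcdef
  have hc0 : 0 < c := by
    rw [hcdef, lt_min_iff]
    constructor
    · rw [hc₁def, Finset.lt_inf'_iff]
      exact fun p _ => hypos p.1 p.2
    · positivity
  have hcle : ∀ t i, c ≤ y t i := by
    intro t i
    rcases lt_or_ge t m with htm | htm
    · have hmem : (t, i) ∈ (Finset.range m) ×ˢ (univ : Finset (Fin n)) := by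
        simp [Finset.mem_product, htm]
      calc c ≤ c₁ := min_le_left _ _
        _ ≤ y t i := Finset.inf'_le _ hmem
    · have h1 : y t i = ∑ l, (P ^ m) i l * y (t - m) l := by
        have := hyrec (t - m) m i
        rw [Nat.sub_add_cancel htm] at this
        exact this
      have h2 : ∑ l, (P ^ m) i l * y (t - m) l ≥ ∑ l, ε * y (t - m) l := by
        apply Finset.sum_le_sum
        intro l _
        exact mul_le_mul_of_nonneg_right (hεle i l) (hypos _ _).le
      have h3 : ∑ l, ε * y (t - m) l = ε * n := by
        rw [← Finset.mul_sum, hysum]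
      calc c ≤ ε * n := min_le_right _ _
        _ = ∑ l, ε * y (t - m) l := h3.symm
        _ ≤ ∑ l, (P ^ m) i l * y (t - m) l := h2
        _ = y t i := h1.symm
  -- contraction constants
  set δ : ℝ := ε * c / n with hδdef
  have hδ0 : 0 < δ := by positivity
  set θ : ℝ := max (1 - n * δ) (1/2) with hθdef
  have hθhalf : 1/2 ≤ θ := le_max_right _ _
  have hθ0 : 0 < θ := lt_of_lt_of_le (by norm_num) hθhalf
  have hθ1 : θ < 1 := by
    rw [hθdef]
    apply max_lt _ (by norm_num)
    nlinarith
  have hθle1 : θ ≤ 1 := hθ1.le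
  -- Phi entries
  have hφ := phi_apply P y hypos Q hQ
  have hφnn : ∀ s d i j, 0 ≤ Phi Q s d i j := by
    intro s d i j
    rw [hφ]
    have := pow_nonneg_entry P hnonneg (d+1) i j
    have := (hypos (s+d+1) i)
    have := (hypos s j).le
    positivity
  have hφrow : ∀ s d i, ∑ j, Phi Q s d i j = 1 := by
    intro s d i
    have h1 : ∑ j, Phi Q s d i j
        = (y (s + d + 1) i)⁻¹ * (∑ j, (P ^ (d+1)) i j * y s j) := by
      rw [Finset.mul_sum]
      apply Finset.sum_congr rfl
      intro j _
      rw [hφ]; ring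
    rw [h1, ← hyrec s (d+1) i]
    have h2 : s + (d + 1) = s + d + 1 := by omega
    rw [h2, inv_mul_cancel₀ (ne_of_gt (hypos _ _))]
  have hφub : ∀ s d i j, Phi Q s d i j ≤ 1 := by
    intro s d i j
    calc Phi Q s d i j ≤ ∑ j', Phi Q s d i j' :=
          Finset.single_le_sum (fun j' _ => hφnn s d i j') (mem_univ j)
      _ = 1 := hφrow s d i
  -- main oscillation decay
  have main : ∀ d s (j : Fin n),
      univ.sup' he (fun i => Phi Q s d i j) - univ.inf' he (fun i => Phi Q s d i j)
        ≤ θ ^ (d / m) := by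
    intro d
    induction d using Nat.strong_induction_on with
    | _ d ih =>
      intro s j
      by_cases hdm : d < m
      · rw [Nat.div_eq_of_lt hdm, pow_zero]
        have h1 : univ.sup' he (fun i => Phi Q s d i j) ≤ 1 :=
          Finset.sup'_le _ _ fun i _ => hφub s d i j
        have h2 : (0:ℝ) ≤ univ.inf' he (fun i => Phi Q s d i j) :=
          Finset.le_inf' _ _ fun i _ => hφnn s d i j
        linarith
      · push_neg at hdm
        set B : Matrix (Fin n) (Fin n) ℝ :=
          Matrix.of fun i l => (y (s + d + 1) i)⁻¹ * (P ^ m) i l * y (s + (d - m) + 1) l with hBdef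
        have hBe : ∀ i l, B i l = (y (s + d + 1) i)⁻¹ * (P ^ m) i l * y (s + (d - m) + 1) l :=
          fun i l => rfl
        have hBrow : ∀ i, ∑ l, B i l = 1 := by
          intro i
          have h1 : ∑ l, B i l = (y (s + d + 1) i)⁻¹ * ∑ l, (P ^ m) i l * y (s + (d - m) + 1) l := by
            rw [Finset.mul_sum]
            exact Finset.sum_congr rfl fun l _ => by rw [hBe]; ring
          rw [h1, ← hyrec (s + (d - m) + 1) m i]
          have h2 : s + (d - m) + 1 + m = s + d + 1 := by omega
          rw [h2, inv_mul_cancel₀ (ne_of_gt (hypos _ _))]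
        have hBδ : ∀ i l, δ ≤ B i l := by
          intro i l
          rw [hBe]
          have h1 : (n:ℝ)⁻¹ ≤ (y (s + d + 1) i)⁻¹ :=
            inv_anti₀ (hypos _ _) (hyub _ _)
          have h2 : δ = (n:ℝ)⁻¹ * ε * c := by rw [hδdef, div_eq_mul_inv]; ring
          rw [h2]
          have hyp := hypos (s + (d - m) + 1) l
          apply mul_le_mul _ (hcle _ _) hc0.le
          · exact mul_nonneg (inv_nonneg.mpr (hypos _ _).le) (hPm i l).le
          · exact mul_le_mul h1 (hεle i l) hε.le (inv_nonneg.mpr (hypos _ _).le)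
        have hBx : (B *ᵥ fun l => Phi Q s (d - m) l j) = fun i => Phi Q s d i j := by
          funext i
          show ∑ l, B i l * Phi Q s (d - m) l j = Phi Q s d i j
          have key : ∀ l, B i l * Phi Q s (d - m) l j
              = (y (s + d + 1) i)⁻¹ * ((P ^ m) i l * (P ^ (d - m + 1)) l j) * y s j := by
            intro l
            rw [hBe, hφ]
            have h1 : y (s + (d - m) + 1) l ≠ 0 := ne_of_gt (hypos _ _)
            calc (y (s+d+1) i)⁻¹ * (P ^ m) i l * y (s+(d-m)+1) l *
                  ((y (s+(d-m)+1) l)⁻¹ * (P ^ (d-m+1)) l j * y s j)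
                = (y (s+d+1) i)⁻¹ * ((P ^ m) i l * (P ^ (d-m+1)) l j) * y s j *
                  (y (s+(d-m)+1) l * (y (s+(d-m)+1) l)⁻¹) := by ring
              _ = (y (s+d+1) i)⁻¹ * ((P ^ m) i l * (P ^ (d-m+1)) l j) * y s j := by
                  rw [mul_inv_cancel₀ h1, mul_one]
          calc ∑ l, B i l * Phi Q s (d - m) l j
              = ∑ l, (y (s + d + 1) i)⁻¹ * ((P ^ m) i l * (P ^ (d - m + 1)) l j) * y s j :=
                Finset.sum_congr rfl fun l _ => key l
            _ = (y (s + d + 1) i)⁻¹ * (∑ l, (P ^ m) i l * (P ^ (d - m + 1)) l j) * y s j := by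
                rw [← Finset.sum_mul, ← Finset.mul_sum]
            _ = (y (s + d + 1) i)⁻¹ * (P ^ (d + 1)) i j * y s j := by
                rw [← Matrix.mul_apply, ← pow_add]
                have h2 : m + (d - m + 1) = d + 1 := by omega
                rw [h2]
            _ = Phi Q s d i j := (hφ s d i j).symm
        have hcon := osc_contract he B (fun l => Phi Q s (d - m) l j) δ hBδ hBrow
        rw [hBx] at hcon
        have step := ih (d - m) (by omega) s j
        have hoscnn : (0:ℝ) ≤ univ.sup' he (fun i => Phi Q s (d-m) i j)
            - univ.inf' he (fun i => Phi Q s (d-m) i j) := by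
          have h1 := Finset.inf'_le (fun i => Phi Q s (d-m) i j) (mem_univ (⟨0,hn⟩ : Fin n))
          have h2 := Finset.le_sup' (fun i => Phi Q s (d-m) i j) (mem_univ (⟨0,hn⟩ : Fin n))
          linarith
        have hθge : 1 - n * δ ≤ θ := le_max_left _ _
        have hdiv : d / m = (d - m) / m + 1 := Nat.div_eq_sub_div hm hdm
        calc univ.sup' he (fun i => Phi Q s d i j) - univ.inf' he (fun i => Phi Q s d i j)
            ≤ (1 - n * δ) * (univ.sup' he (fun i => Phi Q s (d-m) i j)
                - univ.inf' he (fun i => Phi Q s (d-m) i j)) := hcon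
          _ ≤ θ * (univ.sup' he (fun i => Phi Q s (d-m) i j)
                - univ.inf' he (fun i => Phi Q s (d-m) i j)) :=
              mul_le_mul_of_nonneg_right hθge hoscnn
          _ ≤ θ * θ ^ ((d - m) / m) := mul_le_mul_of_nonneg_left step hθ0.le
          _ = θ ^ (d / m) := by rw [hdiv, pow_succ]; ring
  -- assemble
  refine ⟨2, θ ^ ((m:ℝ)⁻¹), two_pos, Real.rpow_pos_of_pos hθ0 _,
    Real.rpow_lt_one hθ0.le hθ1 (by positivity), ?_⟩
  intro s t hst i j
  set d := t - s with hddef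
  -- |Phi - avg| ≤ osc
  set S := univ.sup' he (fun i => Phi Q s d i j) with hSdef
  set I := univ.inf' he (fun i => Phi Q s d i j) with hIdef
  have hiS : Phi Q s d i j ≤ S :=
    Finset.le_sup' (fun i => Phi Q s d i j) (mem_univ i)
  have hiI : I ≤ Phi Q s d i j :=
    Finset.inf'_le (fun i => Phi Q s d i j) (mem_univ i)
  have hsumS : ∑ k, Phi Q s d k j ≤ n * S := by
    calc ∑ k, Phi Q s d k j ≤ ∑ _k : Fin n, S :=
          Finset.sum_le_sum fun k _ => Finset.le_sup' (fun i => Phi Q s d i j) (mem_univ k)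
      _ = n * S := by simp [mul_comm]
  have hsumI : (n:ℝ) * I ≤ ∑ k, Phi Q s d k j := by
    calc (n:ℝ) * I = ∑ _k : Fin n, I := by simp [mul_comm]
      _ ≤ ∑ k, Phi Q s d k j := Finset.sum_le_sum fun k _ => Finset.inf'_le (fun i => Phi Q s d i j) (mem_univ k)
  have habs : |Phi Q s d i j - (1 / n) * ∑ k, Phi Q s d k j| ≤ S - I := by
    rw [abs_sub_le_iff]
    constructor
    · have : (1/(n:ℝ)) * (n * I) ≤ (1/n) * ∑ k, Phi Q s d k j :=
        mul_le_mul_of_nonneg_left hsumI (by positivity)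
      have hI' : (1/(n:ℝ)) * (n * I) = I := by field_simp
      linarith
    · have : (1/(n:ℝ)) * ∑ k, Phi Q s d k j ≤ (1/n) * (n * S) :=
        mul_le_mul_of_nonneg_left hsumS (by positivity)
      have hS' : (1/(n:ℝ)) * (n * S) = S := by field_simp
      linarith
  have hosc := main d s j
  -- θ ^ (d / m) ≤ 2 * (θ ^ (m⁻¹)) ^ d
  have hnat : d ≤ m * (d / m) + m := by
    have h1 := Nat.div_add_mod d m
    have h2 := Nat.mod_lt d hm
    omega
  have hcast : (d:ℝ) ≤ (m:ℝ) * ((d/m : ℕ):ℝ) + m := by exact_mod_cast hnat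
  have hexp : (d:ℝ) * (m:ℝ)⁻¹ - 1 ≤ ((d / m : ℕ) : ℝ) := by
    have h2 : (d:ℝ) * (m:ℝ)⁻¹ ≤ ((m:ℝ) * ((d/m:ℕ):ℝ) + m) * (m:ℝ)⁻¹ :=
      mul_le_mul_of_nonneg_right hcast (inv_nonneg.mpr hmr.le)
    have him : (m:ℝ) * (m:ℝ)⁻¹ = 1 := mul_inv_cancel₀ (ne_of_gt hmr)
    nlinarith [h2, him]
  have hkey : θ ^ (d / m) ≤ 2 * (θ ^ ((m:ℝ)⁻¹)) ^ d := by
    have hrw : (θ ^ ((m:ℝ)⁻¹)) ^ d = θ ^ ((d:ℝ) * (m:ℝ)⁻¹) := by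
      rw [← Real.rpow_natCast (θ ^ ((m:ℝ)⁻¹)) d, ← Real.rpow_mul hθ0.le, mul_comm]
    have h1 : θ ^ (d / m) = θ ^ (((d/m : ℕ)):ℝ) := (Real.rpow_natCast θ _).symm
    have h2 : θ ^ (((d/m : ℕ)):ℝ) ≤ θ ^ ((d:ℝ) * (m:ℝ)⁻¹ - 1) :=
      Real.rpow_le_rpow_of_exponent_ge hθ0 hθle1 hexp
    have h3 : θ ^ ((d:ℝ) * (m:ℝ)⁻¹ - 1) = θ ^ ((d:ℝ) * (m:ℝ)⁻¹) / θ := by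
      rw [Real.rpow_sub hθ0, Real.rpow_one]
    have h4 : θ ^ ((d:ℝ) * (m:ℝ)⁻¹) / θ ≤ 2 * θ ^ ((d:ℝ) * (m:ℝ)⁻¹) :=
      aux_half θ _ hθhalf (Real.rpow_pos_of_pos hθ0 _)
    rw [hrw, h1]
    linarith
  calc |Phi Q s d i j - (1 / n) * ∑ k, Phi Q s d k j| ≤ S - I := habs
    _ ≤ θ ^ (d / m) := hosc
    _ ≤ 2 * (θ ^ ((m:ℝ)⁻¹)) ^ d := hkey
end

section
/- Let (v_t), (u_t), (b_t), (c_t) be nonnegative real sequences with Σ_{t=0}^∞ b_t < ∞, Σ_{t=0}^∞ c_t < ∞, and v_{t+1} ≤ (1 + b_t) v_t − u_t + c_t for all t ≥ 0. Then (v_t) converges to a finite limit and Σ_{t=0}^∞ u_t < ∞. -/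
open Filter

theorem stmt_9 (v u b c : ℕ → ℝ)
    (hv : ∀ t, 0 ≤ v t) (hu : ∀ t, 0 ≤ u t) (hb : ∀ t, 0 ≤ b t) (hc : ∀ t, 0 ≤ c t)
    (hbsum : Summable b) (hcsum : Summable c)
    (hrec : ∀ t, v (t + 1) ≤ (1 + b t) * v t - u t + c t) :
    (∃ L : ℝ, Tendsto v atTop (nhds L)) ∧ Summable u := by
  set P : ℕ → ℝ := fun t => ∏ s ∈ Finset.range t, (1 + b s) with hPdef
  have hPsucc : ∀ t, P (t + 1) = P t * (1 + b t) := fun t => Finset.prod_range_succ _ t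
  have hP1 : ∀ t, 1 ≤ P t := by
    intro t
    induction t with
    | zero => simp [hPdef]
    | succ n ih => rw [hPsucc n]; nlinarith [hb n]
  have hPpos : ∀ t, 0 < P t := fun t => lt_of_lt_of_le one_pos (hP1 t)
  set B : ℝ := Real.exp (∑' s, b s) with hBdef
  have hPB : ∀ t, P t ≤ B := by
    intro t
    calc P t ≤ ∏ s ∈ Finset.range t, Real.exp (b s) :=
        Finset.prod_le_prod (fun s _ => by linarith [hb s]) (fun s _ => by linarith [Real.add_one_le_exp (b s)])
      _ = Real.exp (∑ s ∈ Finset.range t, b s) := (Real.exp_sum _ _).symm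
      _ ≤ B := Real.exp_le_exp.mpr (Summable.sum_le_tsum _ (fun s _ => hb s) hbsum)
  have hc'le : ∀ s, c s / P (s + 1) ≤ c s := by
    intro s
    rw [div_le_iff₀ (hPpos _)]
    nlinarith [hP1 (s + 1), hc s]
  have hc'nonneg : ∀ s, 0 ≤ c s / P (s + 1) := fun s => div_nonneg (hc s) (hPpos _).le
  have hcsum' : Summable (fun s => c s / P (s + 1)) :=
    Summable.of_nonneg_of_le hc'nonneg hc'le hcsum
  set C : ℝ := ∑' s, c s / P (s + 1) with hCdef
  set z : ℕ → ℝ := fun t => v t / P t - ∑ s ∈ Finset.range t, c s / P (s + 1) with hzdef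
  have hzstep : ∀ t, z (t + 1) + u t / P (t + 1) ≤ z t := by
    intro t
    have key : v (t + 1) / P (t + 1) ≤ v t / P t - u t / P (t + 1) + c t / P (t + 1) := by
      have h1 : v (t + 1) / P (t + 1) ≤ ((1 + b t) * v t - u t + c t) / P (t + 1) :=
        (div_le_div_iff_of_pos_right (hPpos (t + 1))).mpr (hrec t)
      have h2 : ((1 + b t) * v t - u t + c t) / P (t + 1)
          = v t / P t - u t / P (t + 1) + c t / P (t + 1) := by
        rw [hPsucc t]
        have hpt := (hPpos t).ne'
        have hbt : (1 + b t) ≠ 0 := ne_of_gt (by linarith [hb t])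
        field_simp
      linarith [h1, h2 ▸ h1]
    simp only [hzdef, Finset.sum_range_succ]
    linarith
  have hzanti : Antitone z := antitone_nat_of_succ_le fun t => by
    clear_value z
    have := hzstep t
    have h0 : 0 ≤ u t / P (t + 1) := div_nonneg (hu t) (hPpos _).le
    linarith
  have hzlb : ∀ t, -C ≤ z t := by
    intro t
    have h1 : ∑ s ∈ Finset.range t, c s / P (s + 1) ≤ C :=
      Summable.sum_le_tsum _ (fun s _ => hc'nonneg s) hcsum'
    have h2 : 0 ≤ v t / P t := div_nonneg (hv t) (hPpos t).le
    simp only [hzdef]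
    linarith
  have hzbdd : BddBelow (Set.range z) := ⟨-C, fun x ⟨t, ht⟩ => ht ▸ hzlb t⟩
  have hztend : Tendsto z atTop (nhds (⨅ t, z t)) := tendsto_atTop_ciInf hzanti hzbdd
  have hStend : Tendsto (fun t => ∑ s ∈ Finset.range t, c s / P (s + 1)) atTop (nhds C) :=
    hcsum'.hasSum.tendsto_sum_nat
  have hPmono : Monotone P := monotone_nat_of_le_succ fun t => by
    rw [hPsucc t]
    nlinarith [hb t, hPpos t]
  have hPbdd : BddAbove (Set.range P) := ⟨B, fun x ⟨t, ht⟩ => ht ▸ hPB t⟩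
  have hPtend : Tendsto P atTop (nhds (⨆ t, P t)) := tendsto_atTop_ciSup hPmono hPbdd
  constructor
  · refine ⟨((⨅ t, z t) + C) * (⨆ t, P t), ?_⟩
    have : Tendsto (fun t => (z t + ∑ s ∈ Finset.range t, c s / P (s + 1)) * P t) atTop
        (nhds (((⨅ t, z t) + C) * (⨆ t, P t))) := (hztend.add hStend).mul hPtend
    refine this.congr fun t => ?_
    simp only [hzdef]
    rw [sub_add_cancel]
    exact div_mul_cancel₀ _ (hPpos t).ne'
  · -- Summable u
    clear_value z
    have htel : Summable (fun t => z t - z (t + 1)) := by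
      apply summable_of_sum_range_le (c := z 0 + C)
      · intro t
        have := hzanti (Nat.le_succ t)
        linarith
      · intro n
        rw [Finset.sum_range_sub' z n]
        linarith [hzlb n]
    have hle : ∀ t, u t ≤ B * (z t - z (t + 1)) := by
      intro t
      have h1 : u t / P (t + 1) ≤ z t - z (t + 1) := by linarith [hzstep t]
      have h2 : u t ≤ P (t + 1) * (z t - z (t + 1)) := by
        rw [← div_le_iff₀' (hPpos _)] -- u t / P (t+1) ≤ ...
        exact h1
      have h3 : P (t + 1) * (z t - z (t + 1)) ≤ B * (z t - z (t + 1)) := by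
        have hd : 0 ≤ z t - z (t + 1) := by
          have := hzanti (Nat.le_succ t); linarith
        exact mul_le_mul_of_nonneg_right (hPB _) hd
      linarith
    exact Summable.of_nonneg_of_le hu hle (htel.mul_left B)
end

section
/- Let P be an n×n column-stochastic nonnegative matrix with y[t+1] = P y[t] entrywise positive, let Q[t]_{ij} = P_{ij} y_j[t] / y_i[t+1], and let z_i = Σ_j Q[t]_{ij} x_j for vectors x_1,…,x_n ∈ ℝ^d and any x* ∈ ℝ^d. Then Σ_{i=1}^n y_i[t+1] ‖z_i − x*‖² ≤ Σ_{i=1}^n y_i[t] ‖x_i − x*‖². -/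
open Finset

theorem stmt_14 {d n : ℕ} (P : Matrix (Fin n) (Fin n) ℝ)
    (hPnonneg : ∀ i j, 0 ≤ P i j) (hPcol : ∀ j, ∑ i, P i j = 1)
    (yt yt1 : Fin n → ℝ) (hyt : ∀ i, 0 < yt i) (hyt1 : ∀ i, 0 < yt1 i)
    (hupdate : ∀ i, yt1 i = ∑ j, P i j * yt j)
    (Q : Matrix (Fin n) (Fin n) ℝ) (hQ : ∀ i j, Q i j = P i j * yt j / yt1 i)
    (x : Fin n → EuclideanSpace ℝ (Fin d)) (xstar : EuclideanSpace ℝ (Fin d))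
    (z : Fin n → EuclideanSpace ℝ (Fin d)) (hz : ∀ i, z i = ∑ j, Q i j • x j) :
    ∑ i, yt1 i * ‖z i - xstar‖ ^ 2 ≤ ∑ i, yt i * ‖x i - xstar‖ ^ 2 := by
  have hQnn : ∀ i j, 0 ≤ Q i j := fun i j => by
    rw [hQ]
    exact div_nonneg (mul_nonneg (hPnonneg i j) (hyt j).le) (hyt1 i).le
  have hQrow : ∀ i, ∑ j, Q i j = 1 := fun i => by
    have : ∑ j, Q i j = (∑ j, P i j * yt j) / yt1 i := by
      rw [Finset.sum_div]; exact Finset.sum_congr rfl fun j _ => hQ i j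
    rw [this, ← hupdate i, div_self (hyt1 i).ne']
  have key : ∀ i, ‖z i - xstar‖ ^ 2 ≤ ∑ j, Q i j * ‖x j - xstar‖ ^ 2 := by
    intro i
    have hzx : z i - xstar = ∑ j, Q i j • (x j - xstar) := by
      rw [hz i]
      simp only [smul_sub, Finset.sum_sub_distrib, ← Finset.sum_smul, hQrow i, one_smul]
    have h1 : ‖z i - xstar‖ ≤ ∑ j, Q i j * ‖x j - xstar‖ := by
      rw [hzx]
      refine (norm_sum_le _ _).trans_eq ?_
      apply Finset.sum_congr rfl
      intro j _
      rw [norm_smul, Real.norm_eq_abs, abs_of_nonneg (hQnn i j)]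
    have h2 : (∑ j, Q i j * ‖x j - xstar‖) ^ 2 ≤ ∑ j, Q i j * ‖x j - xstar‖ ^ 2 := by
      have := (convexOn_pow (𝕜 := ℝ) 2).map_sum_le (t := Finset.univ)
        (w := fun j => Q i j) (p := fun j => ‖x j - xstar‖)
        (fun j _ => hQnn i j) (hQrow i) (fun j _ => norm_nonneg _)
      simpa using this
    calc ‖z i - xstar‖ ^ 2 ≤ (∑ j, Q i j * ‖x j - xstar‖) ^ 2 := by
          apply pow_le_pow_left₀ (norm_nonneg _) h1
      _ ≤ _ := h2
  calc ∑ i, yt1 i * ‖z i - xstar‖ ^ 2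
      ≤ ∑ i, yt1 i * ∑ j, Q i j * ‖x j - xstar‖ ^ 2 := by
        apply Finset.sum_le_sum
        intro i _
        exact mul_le_mul_of_nonneg_left (key i) (hyt1 i).le
    _ = ∑ j, (∑ i, P i j) * (yt j * ‖x j - xstar‖ ^ 2) := by
        simp_rw [Finset.mul_sum]
        rw [Finset.sum_comm]
        apply Finset.sum_congr rfl
        intro j _
        rw [Finset.sum_mul]
        apply Finset.sum_congr rfl
        intro i _
        rw [hQ]
        have h0 : yt1 i ≠ 0 := (hyt1 i).ne'
        field_simp
    _ = ∑ j, yt j * ‖x j - xstar‖ ^ 2 := by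
        simp [hPcol]
end

section
/- Consider the push-sum gradient algorithm: x_i[t+1] = z_i[t] + ε_i[t] where z[t] = Q[t] x[t] with Q[t] = diag(y[t+1])^{-1} P diag(y[t]), P column-stochastic primitive, and the perturbations satisfy ‖ε_i[t]‖ ≤ α_t L / y_i[t+1] for a bounded L and positive weights y_i (bounded below away from 0 along the iteration). If α_t → 0, then for every i, lim_{t→∞} ‖x_i[t] − x̄[t]‖ = 0, where x̄[t] = (1/n) Σ_{j=1}^n x_j[t]. -/
/-!
Write `y t = P ^ t *ᵥ 1` and `u t = y t • x t`. Then `u (t + 1) = P u t + δ t` with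
`‖δ t i‖ ≤ α t * L`, and the deviation `D t = u t - y t ⊗ (mean of u t)` has zero sum and obeys
the same recursion with a perturbation of size `O(α t)`. As `P ^ k` has all entries `≥ c > 0`,
Dobrushin's bound contracts the `ℓ¹` norm of zero-sum vectors by `1 - n c` every `k` steps, so
`D t → 0`. Finally `x t i - x̄ t` is controlled by `D t / y t`, and `y t ≥ n c` for `t ≥ k`.
-/

open Matrix Finset Filter Topology

section Contraction

theorem tendsto_zero_of_le_mul_add {a b : ℕ → ℝ} {θ : ℝ} (ha : ∀ m, 0 ≤ a m) (hθ0 : 0 ≤ θ)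
    (hθ1 : θ < 1) (hb : Tendsto b atTop (𝓝 0)) (hrec : ∀ m, a (m + 1) ≤ θ * a m + b m) :
    Tendsto a atTop (𝓝 0) := by
  refine tendsto_order.2 ⟨fun η hη => .of_forall fun m => hη.trans_le (ha m), fun η hη => ?_⟩
  obtain ⟨N, hN⟩ := eventually_atTop.1 <|
    hb.eventually (gt_mem_nhds (mul_pos (sub_pos.2 hθ1) (half_pos hη)))
  have hiter : ∀ m, a (N + m) ≤ θ ^ m * a N + η / 2 := by
    intro m
    induction m with
    | zero => simp; linarith
    | succ m ih =>
      calc a (N + (m + 1)) ≤ θ * a (N + m) + b (N + m) := hrec (N + m)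
        _ ≤ θ * (θ ^ m * a N + η / 2) + (1 - θ) * (η / 2) :=
          add_le_add (mul_le_mul_of_nonneg_left ih hθ0) (hN _ (Nat.le_add_right N m)).le
        _ = θ ^ (m + 1) * a N + η / 2 := by ring
  have hpow : Tendsto (fun m => θ ^ m * a N) atTop (𝓝 0) := by
    simpa using (tendsto_pow_atTop_nhds_zero_of_lt_one hθ0 hθ1).mul_const (a N)
  obtain ⟨M, hM⟩ := eventually_atTop.1 (hpow.eventually (gt_mem_nhds (half_pos hη)))
  filter_upwards [eventually_ge_atTop (N + M)] with m hm
  obtain ⟨j, rfl⟩ := Nat.exists_eq_add_of_le (le_trans (Nat.le_add_right N M) hm)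
  linarith [hiter j, hM j (by omega)]

/-- The `k`-step version reduces to `k = 1` by summing `f` over blocks of length `k`. -/
theorem tendsto_zero_of_add_le_mul_add {f g : ℕ → ℝ} {θ : ℝ} {k : ℕ} (hk : 0 < k)
    (hf : ∀ t, 0 ≤ f t) (hθ0 : 0 ≤ θ) (hθ1 : θ < 1) (hg : Tendsto g atTop (𝓝 0))
    (hrec : ∀ t, f (t + k) ≤ θ * f t + g t) : Tendsto f atTop (𝓝 0) := by
  have hblock : Tendsto (fun m => ∑ r ∈ range k, f (m * k + r)) atTop (𝓝 0) := by
    refine tendsto_zero_of_le_mul_add (fun m => sum_nonneg fun r _ => hf _) hθ0 hθ1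
      (b := fun m => ∑ r ∈ range k, g (m * k + r)) ?_ fun m => ?_
    · have hmk : ∀ r, Tendsto (fun m => m * k + r) atTop atTop := fun r =>
        tendsto_atTop_mono (fun m => Nat.le_add_right_of_le (Nat.le_mul_of_pos_right m hk))
          tendsto_id
      simpa using tendsto_finsetSum (range k) fun r _ => hg.comp (hmk r)
    · calc ∑ r ∈ range k, f ((m + 1) * k + r)
          = ∑ r ∈ range k, f ((m * k + r) + k) := by congr! 2; ring
        _ ≤ ∑ r ∈ range k, (θ * f (m * k + r) + g (m * k + r)) := sum_le_sum fun r _ => hrec _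
        _ = θ * ∑ r ∈ range k, f (m * k + r) + ∑ r ∈ range k, g (m * k + r) := by
          rw [sum_add_distrib, mul_sum]
  refine squeeze_zero hf (fun t => ?_) (hblock.comp (Nat.tendsto_div_const_atTop hk.ne'))
  calc f t = f (t / k * k + t % k) := by rw [Nat.div_add_mod']
    _ ≤ ∑ r ∈ range k, f (t / k * k + r) :=
      single_le_sum (fun r _ => hf _) (mem_range.2 (Nat.mod_lt t hk))

end Contraction

namespace Matrix

section SMulVec

variable {ι κ μ R M : Type*} [Fintype κ] [Fintype μ] [Semiring R] [AddCommMonoid M] [Module R M]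

def smulVec (A : Matrix ι κ R) (v : κ → M) : ι → M := fun i => ∑ j, A i j • v j

theorem smulVec_mul (A : Matrix ι κ R) (B : Matrix κ μ R) (v : μ → M) :
    (A * B).smulVec v = A.smulVec (B.smulVec v) := by
  funext i
  simp only [smulVec, mul_apply, sum_smul, smul_sum, mul_smul]
  exact sum_comm

theorem smulVec_const_smul (A : Matrix ι κ R) (y : κ → R) (w : M) :
    A.smulVec (fun j => y j • w) = fun i => (A *ᵥ y) i • w := by
  funext i
  simp only [smulVec, mulVec, dotProduct, sum_smul, mul_smul]

theorem sum_smulVec [Fintype ι] (A : Matrix ι κ R) (v : κ → M) :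
    ∑ i, A.smulVec v i = ∑ j, (∑ i, A i j) • v j := by
  simp only [smulVec, sum_smul]
  exact sum_comm

theorem diagonal_mul_mul_diagonal_smulVec [Fintype ι] [DecidableEq ι] [DecidableEq κ] (a : ι → R)
    (A : Matrix ι κ R) (b : κ → R) (v : κ → M) :
    (diagonal a * A * diagonal b).smulVec v = fun i => a i • A.smulVec (fun j => b j • v j) i := by
  funext i
  simp only [smulVec, mul_diagonal, diagonal_mul, smul_sum, mul_smul]

theorem smul_diagonal_inv_mul_mul_diagonal_smulVec {K : Type*} [Fintype ι] [DecidableEq ι]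
    [DecidableEq κ] [DivisionSemiring K] [Module K M] {w : ι → K} (hw : ∀ i, w i ≠ 0)
    (A : Matrix ι κ K) (y : κ → K) (v : κ → M) (i : ι) :
    w i • (diagonal (fun i => (w i)⁻¹) * A * diagonal y).smulVec v i =
      A.smulVec (fun j => y j • v j) i := by
  rw [diagonal_mul_mul_diagonal_smulVec, smul_smul, mul_inv_cancel₀ (hw i), one_smul]

theorem smulVec_sub {M : Type*} [AddCommGroup M] [Module R M] (A : Matrix ι κ R) (v w : κ → M) :
    A.smulVec (v - w) = A.smulVec v - A.smulVec w := by
  funext i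
  simp only [smulVec, Pi.sub_apply, smul_sub, sum_sub_distrib]

end SMulVec

section Norm

variable {ι E : Type*} [Fintype ι] [NormedAddCommGroup E] [NormedSpace ℝ E]

theorem sum_norm_smulVec_le {A : Matrix ι ι ℝ} {s : ℝ} (hA : ∀ i j, 0 ≤ A i j)
    (hs : ∀ j, ∑ i, A i j ≤ s) (v : ι → E) :
    ∑ i, ‖A.smulVec v i‖ ≤ s * ∑ j, ‖v j‖ := by
  calc ∑ i, ‖A.smulVec v i‖ ≤ ∑ i, ∑ j, A i j * ‖v j‖ := by
        refine sum_le_sum fun i _ => (norm_sum_le _ _).trans_eq ?_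
        simp only [norm_smul, Real.norm_of_nonneg (hA _ _)]
    _ = ∑ j, (∑ i, A i j) * ‖v j‖ := by
        rw [sum_comm]
        simp only [sum_mul]
    _ ≤ s * ∑ j, ‖v j‖ := by
        rw [mul_sum]
        exact sum_le_sum fun j _ => mul_le_mul_of_nonneg_right (hs j) (norm_nonneg _)

/-- Dobrushin's bound: on zero-sum vectors `A` acts as `A - c`, whose column sums are
`1 - card ι * c`. -/
theorem sum_norm_smulVec_le_of_sum_eq_zero {A : Matrix ι ι ℝ} {c : ℝ} (hc : ∀ i j, c ≤ A i j)
    (hcol : ∀ j, ∑ i, A i j = 1) {v : ι → E} (hv : ∑ j, v j = 0) :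
    ∑ i, ‖A.smulVec v i‖ ≤ (1 - Fintype.card ι * c) * ∑ j, ‖v j‖ := by
  have hshift : A.smulVec v = (A - of fun _ _ => c).smulVec v := by
    funext i
    simp only [smulVec, sub_apply, of_apply, sub_smul, sum_sub_distrib, ← smul_sum, hv,
      smul_zero, sub_zero]
  rw [hshift]
  refine sum_norm_smulVec_le (fun i j => sub_nonneg.2 (hc i j)) (fun j => le_of_eq ?_) v
  simp [sum_sub_distrib, hcol]

variable [DecidableEq ι]

theorem sum_norm_sub_pow_smulVec_le {A : Matrix ι ι ℝ} (hA : A ∈ colStochastic ℝ ι)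
    {D e : ℕ → ι → E} (hD : ∀ t, D (t + 1) = A.smulVec (D t) + e t) (t m : ℕ) :
    ∑ i, ‖D (t + m) i - (A ^ m).smulVec (D t) i‖ ≤ ∑ s ∈ range m, ∑ i, ‖e (t + s) i‖ := by
  induction m with
  | zero => simp [smulVec, one_apply]
  | succ m ih =>
    have hstep : D (t + (m + 1)) - (A ^ (m + 1)).smulVec (D t) =
        A.smulVec (D (t + m) - (A ^ m).smulVec (D t)) + e (t + m) := by
      rw [← add_assoc, hD, pow_succ', smulVec_mul, smulVec_sub]
      abel
    calc ∑ i, ‖D (t + (m + 1)) i - (A ^ (m + 1)).smulVec (D t) i‖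
        ≤ ∑ i, ‖A.smulVec (D (t + m) - (A ^ m).smulVec (D t)) i‖ + ∑ i, ‖e (t + m) i‖ := by
          rw [← sum_add_distrib]
          refine sum_le_sum fun i _ => ?_
          rw [← Pi.sub_apply, hstep]
          exact norm_add_le _ _
      _ ≤ 1 * ∑ i, ‖D (t + m) i - (A ^ m).smulVec (D t) i‖ + ∑ i, ‖e (t + m) i‖ :=
          add_le_add (sum_norm_smulVec_le (fun _ _ => hA.1 _ _)
            (fun j => (sum_col_of_mem_colStochastic hA j).le) _) le_rfl
      _ ≤ ∑ s ∈ range (m + 1), ∑ i, ‖e (t + s) i‖ := by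
          rw [one_mul, sum_range_succ]
          exact add_le_add ih le_rfl

theorem tendsto_sum_norm_zero_of_perturbed [Nonempty ι] {A : Matrix ι ι ℝ}
    (hA : A ∈ colStochastic ℝ ι) {k : ℕ} (hk : 0 < k) {c : ℝ} (hc : 0 < c)
    (hck : ∀ i j, c ≤ (A ^ k) i j) {D e : ℕ → ι → E}
    (hD : ∀ t, D (t + 1) = A.smulVec (D t) + e t) (hD0 : ∀ t, ∑ i, D t i = 0)
    (he : Tendsto (fun t => ∑ i, ‖e t i‖) atTop (𝓝 0)) :
    Tendsto (fun t => ∑ i, ‖D t i‖) atTop (𝓝 0) := by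
  have hcolk := sum_col_of_mem_colStochastic (pow_mem hA k)
  have hθ0 : 0 ≤ 1 - Fintype.card ι * c := by
    have := sum_le_sum fun i (_ : i ∈ univ) => hck i (Classical.arbitrary ι)
    rw [hcolk, sum_const, card_univ, nsmul_eq_mul] at this
    linarith
  have hθ1 : 1 - Fintype.card ι * c < 1 :=
    sub_lt_self 1 (mul_pos (Nat.cast_pos.2 Fintype.card_pos) hc)
  refine tendsto_zero_of_add_le_mul_add hk (fun t => sum_nonneg fun i _ => norm_nonneg _) hθ0 hθ1
    (g := fun t => ∑ s ∈ range k, ∑ i, ‖e (t + s) i‖)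
    (by simpa using tendsto_finsetSum (range k) fun s _ => he.comp (tendsto_add_atTop_nat s))
    fun t => ?_
  calc ∑ i, ‖D (t + k) i‖
      ≤ ∑ i, ‖(A ^ k).smulVec (D t) i‖ + ∑ i, ‖D (t + k) i - (A ^ k).smulVec (D t) i‖ := by
        rw [← sum_add_distrib]
        exact sum_le_sum fun i _ => norm_le_insert' _ _
    _ ≤ (1 - Fintype.card ι * c) * ∑ i, ‖D t i‖ + ∑ s ∈ range k, ∑ i, ‖e (t + s) i‖ :=
        add_le_add (sum_norm_smulVec_le_of_sum_eq_zero hck hcolk (hD0 t))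
          (sum_norm_sub_pow_smulVec_le hA hD t k)

end Norm

section ColStochastic

variable {ι : Type*} [Fintype ι] [DecidableEq ι] {P : Matrix ι ι ℝ}

theorem isPrimitive_of_mem_colStochastic (hP : P ∈ colStochastic ℝ ι)
    (hprim : ∃ k, ∀ i j, 0 < (P ^ k) i j) : P.IsPrimitive := by
  obtain ⟨k, hk⟩ := hprim
  refine ⟨hP.1, k + 1, k.succ_pos, fun i j => ?_⟩
  obtain ⟨l, -, hl⟩ := (sum_pos_iff_of_nonneg fun l _ => hP.1 l j).1
    ((sum_col_of_mem_colStochastic hP j).symm ▸ one_pos)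
  rw [pow_succ, mul_apply]
  exact (sum_pos_iff_of_nonneg fun m _ => mul_nonneg (hk i m).le (hP.1 m j)).2
    ⟨l, mem_univ l, mul_pos (hk i l) hl⟩

theorem IsPrimitive.exists_pos_le_pow [Nonempty ι] (hP : P.IsPrimitive) :
    ∃ k > 0, ∃ c > 0, ∀ i j, c ≤ (P ^ k) i j := by
  obtain ⟨k, hk, hpos⟩ := hP.exists_pos_pow
  obtain ⟨⟨i₀, j₀⟩, hmin⟩ := Finite.exists_min fun p : ι × ι => (P ^ k) p.1 p.2
  exact ⟨k, hk, _, hpos i₀ j₀, fun i j => hmin (i, j)⟩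

theorem sum_pow_mulVec_one (hP : P ∈ colStochastic ℝ ι) (t : ℕ) :
    ∑ i, (P ^ t *ᵥ 1) i = Fintype.card ι := by
  simp [sum_mulVec_of_mem_colStochastic (pow_mem hP t)]

theorem card_mul_le_pow_add_mulVec_one (hP : P ∈ colStochastic ℝ ι) {k : ℕ} {c : ℝ}
    (hc : ∀ i j, c ≤ (P ^ k) i j) (t : ℕ) (i : ι) :
    Fintype.card ι * c ≤ (P ^ (k + t) *ᵥ 1) i := by
  have hy := nonneg_mulVec_of_mem_colStochastic (pow_mem hP t) (x := 1) fun _ => zero_le_one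
  rw [pow_add, ← mulVec_mulVec, ← sum_pow_mulVec_one hP t, sum_mul]
  exact sum_le_sum fun j _ => by rw [mul_comm]; exact mul_le_mul_of_nonneg_right (hc i j) (hy j)

end ColStochastic

section Deviation

variable {ι E : Type*} [Fintype ι] [NormedAddCommGroup E] [NormedSpace ℝ E]

noncomputable def deviation (y : ι → ℝ) (u : ι → E) : ι → E :=
  fun i => u i - y i • (Fintype.card ι : ℝ)⁻¹ • ∑ j, u j

theorem sum_deviation [Nonempty ι] {y : ι → ℝ} (hy : ∑ i, y i = Fintype.card ι) (u : ι → E) :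
    ∑ i, deviation y u i = 0 := by
  unfold deviation
  rw [sum_sub_distrib, ← sum_smul, hy, smul_smul,
    mul_inv_cancel₀ (Nat.cast_ne_zero.2 Fintype.card_ne_zero), one_smul, sub_self]

theorem deviation_smulVec_add {A : Matrix ι ι ℝ} (hA : ∀ j, ∑ i, A i j = 1) (y : ι → ℝ)
    (u δ : ι → E) :
    deviation (A *ᵥ y) (A.smulVec u + δ) = A.smulVec (deviation y u) + deviation (A *ᵥ y) δ := by
  have hsum : ∑ i, A.smulVec u i = ∑ i, u i := by simp [sum_smulVec, hA]
  unfold deviation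
  rw [← Pi.sub_def u, smulVec_sub, smulVec_const_smul]
  funext i
  simp only [Pi.add_apply, Pi.sub_apply, sum_add_distrib, hsum, smul_add]
  abel

theorem deviation_smul (y : ι → ℝ) (x : ι → E) (i : ι) :
    deviation y (fun j => y j • x j) i =
      y i • (x i - (Fintype.card ι : ℝ)⁻¹ • ∑ j, y j • x j) := by
  rw [deviation, smul_sub]

theorem sum_norm_deviation_le [Nonempty ι] {y : ι → ℝ} (hy0 : ∀ i, 0 ≤ y i)
    (hy : ∑ i, y i = Fintype.card ι) (v : ι → E) :
    ∑ i, ‖deviation y v i‖ ≤ 2 * ∑ i, ‖v i‖ := by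
  have hcard : (Fintype.card ι : ℝ) ≠ 0 := Nat.cast_ne_zero.2 Fintype.card_ne_zero
  calc ∑ i, ‖deviation y v i‖
      ≤ ∑ i, (‖v i‖ + y i * ((Fintype.card ι : ℝ)⁻¹ * ‖∑ j, v j‖)) := by
        refine sum_le_sum fun i _ => (norm_sub_le _ _).trans_eq ?_
        rw [norm_smul, norm_smul, Real.norm_of_nonneg (hy0 i),
          Real.norm_of_nonneg (inv_nonneg.2 (Nat.cast_nonneg _))]
    _ = ∑ i, ‖v i‖ + ‖∑ j, v j‖ := by
        rw [sum_add_distrib, ← sum_mul, hy, ← mul_assoc, mul_inv_cancel₀ hcard, one_mul]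
    _ ≤ 2 * ∑ i, ‖v i‖ := by linarith [norm_sum_le (univ : Finset ι) v]

theorem sum_norm_deviation_smul_le [Nonempty ι] {y : ι → ℝ} (hy0 : ∀ i, 0 < y i)
    (hy : ∑ i, y i = Fintype.card ι) {v : ι → E} {a : ℝ} (hv : ∀ i, ‖v i‖ ≤ a / y i) :
    ∑ i, ‖deviation y (fun i => y i • v i) i‖ ≤ 2 * Fintype.card ι * a := by
  have hyv : ∀ i, ‖y i • v i‖ ≤ a := fun i => by
    rw [norm_smul, Real.norm_of_nonneg (hy0 i).le, ← le_div_iff₀' (hy0 i)]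
    exact hv i
  calc ∑ i, ‖deviation y (fun i => y i • v i) i‖ ≤ 2 * ∑ i, ‖y i • v i‖ :=
        sum_norm_deviation_le (fun i => (hy0 i).le) hy _
    _ ≤ 2 * Fintype.card ι * a := by
        rw [mul_assoc]
        gcongr
        simpa using sum_le_sum fun i (_ : i ∈ univ) => hyv i

theorem norm_sub_mean_le [Nonempty ι] (w : ι → E) (m : E) (i : ι) :
    ‖w i - (Fintype.card ι : ℝ)⁻¹ • ∑ j, w j‖ ≤ 2 * ∑ j, ‖w j - m‖ := by
  have hcard : (1 : ℝ) ≤ Fintype.card ι := Nat.one_le_cast.2 Fintype.card_pos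
  have hcenter : w i - (Fintype.card ι : ℝ)⁻¹ • ∑ j, w j =
      (w i - m) - (Fintype.card ι : ℝ)⁻¹ • ∑ j, (w j - m) := by
    rw [sum_sub_distrib, sum_const, card_univ, ← Nat.cast_smul_eq_nsmul ℝ, smul_sub, smul_smul,
      inv_mul_cancel₀ (by positivity), one_smul]
    abel
  have hi : ‖w i - m‖ ≤ ∑ j, ‖w j - m‖ :=
    single_le_sum (f := fun j => ‖w j - m‖) (fun j _ => norm_nonneg _) (mem_univ i)
  have hmean : ‖(Fintype.card ι : ℝ)⁻¹ • ∑ j, (w j - m)‖ ≤ ∑ j, ‖w j - m‖ := by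
    rw [norm_smul, Real.norm_of_nonneg (by positivity)]
    exact (mul_le_of_le_one_left (norm_nonneg _) (inv_le_one_of_one_le₀ hcard)).trans
      (norm_sum_le _ _)
  rw [hcenter]
  linarith [norm_sub_le (w i - m) ((Fintype.card ι : ℝ)⁻¹ • ∑ j, (w j - m))]

theorem norm_sub_mean_le_of_le [Nonempty ι] {y : ι → ℝ} {b : ℝ} (hb : 0 < b)
    (hy : ∀ j, b ≤ y j) (x : ι → E) (i : ι) :
    ‖x i - (Fintype.card ι : ℝ)⁻¹ • ∑ j, x j‖ ≤
      2 / b * ∑ j, ‖deviation y (fun j => y j • x j) j‖ := by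
  set m := (Fintype.card ι : ℝ)⁻¹ • ∑ j, y j • x j
  calc ‖x i - (Fintype.card ι : ℝ)⁻¹ • ∑ j, x j‖ ≤ 2 * ∑ j, ‖x j - m‖ := norm_sub_mean_le x m i
    _ ≤ 2 * ∑ j, ‖deviation y (fun j => y j • x j) j‖ / b := by
        gcongr with j
        rw [le_div_iff₀' hb, deviation_smul, norm_smul, Real.norm_of_nonneg (hb.le.trans (hy j))]
        exact mul_le_mul_of_nonneg_right (hy j) (norm_nonneg (x j - m))
    _ = 2 / b * ∑ j, ‖deviation y (fun j => y j • x j) j‖ := by rw [← sum_div]; ring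

end Deviation

end Matrix

theorem stmt_15_general {n d : ℕ} (P : Matrix (Fin n) (Fin n) ℝ)
    (hnonneg : ∀ i j, 0 ≤ P i j)
    (hcol : ∀ j, ∑ i, P i j = 1)
    (hprim : ∃ k : ℕ, ∀ i j, 0 < (P ^ k) i j)
    (y : ℕ → Fin n → ℝ)
    (hy : ∀ t, y t = (P ^ t) *ᵥ (fun _ => (1 : ℝ)))
    (hypos : ∀ t i, 0 < y t i)
    (Q : ℕ → Matrix (Fin n) (Fin n) ℝ)
    (hQ : ∀ t, Q t = Matrix.diagonal (fun i => (y (t + 1) i)⁻¹) * P * Matrix.diagonal (y t))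
    (α : ℕ → ℝ)
    (hαlim : Tendsto α atTop (nhds 0))
    (L : ℝ)
    (x : ℕ → Fin n → EuclideanSpace ℝ (Fin d))
    (ε : ℕ → Fin n → EuclideanSpace ℝ (Fin d))
    (hεbound : ∀ t i, ‖ε t i‖ ≤ α t * L / y (t + 1) i)
    (hupdate : ∀ t i, x (t + 1) i = (∑ j, Q t i j • x t j) + ε t i) :
    ∀ i, Tendsto (fun t => ‖x t i - (n : ℝ)⁻¹ • ∑ j, x t j‖) atTop (nhds 0) := by
  intro i
  have : Nonempty (Fin n) := ⟨i⟩
  have hP : P ∈ colStochastic ℝ (Fin n) := mem_colStochastic_iff_sum.2 ⟨hnonneg, hcol⟩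
  obtain ⟨k, hk, c, hc, hck⟩ := (isPrimitive_of_mem_colStochastic hP hprim).exists_pos_le_pow
  have hysum : ∀ t, ∑ j, y t j = Fintype.card (Fin n) := fun t => by
    rw [hy]; exact sum_pow_mulVec_one hP t
  set u := fun t j => y t j • x t j
  set δ := fun t j => y (t + 1) j • ε t j
  have hu : ∀ t, u (t + 1) = P.smulVec (u t) + δ t := fun t => by
    funext j
    rw [Pi.add_apply, ← smul_diagonal_inv_mul_mul_diagonal_smulVec (fun i => (hypos (t + 1) i).ne'),
      ← hQ]
    simp only [u, δ, hupdate, smul_add]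
    rfl
  have hD : ∀ t, deviation (y (t + 1)) (u (t + 1)) =
      P.smulVec (deviation (y t) (u t)) + deviation (y (t + 1)) (δ t) := fun t => by
    rw [hu, hy (t + 1), pow_succ', ← mulVec_mulVec, ← hy t,
      deviation_smulVec_add (sum_col_of_mem_colStochastic hP)]
  have he : Tendsto (fun t => ∑ j, ‖deviation (y (t + 1)) (δ t) j‖) atTop (𝓝 0) :=
    squeeze_zero (fun t => sum_nonneg fun _ _ => norm_nonneg _)
      (fun t => sum_norm_deviation_smul_le (hypos (t + 1)) (hysum _) (hεbound t))
      (by simpa using (hαlim.mul_const L).const_mul (2 * (Fintype.card (Fin n) : ℝ)))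
  have hV := tendsto_sum_norm_zero_of_perturbed hP hk hc hck
    (D := fun t => deviation (y t) (u t)) hD (fun t => sum_deviation (hysum t) _) he
  refine squeeze_zero' (.of_forall fun t => norm_nonneg _) ?_
    (by simpa using hV.const_mul (2 / (Fintype.card (Fin n) * c)))
  filter_upwards [eventually_ge_atTop k] with t ht
  obtain ⟨s, rfl⟩ := Nat.exists_eq_add_of_le ht
  have hlow : ∀ j, Fintype.card (Fin n) * c ≤ y (k + s) j := fun j => by
    rw [hy]; exact card_mul_le_pow_add_mulVec_one hP hck s j
  simpa using norm_sub_mean_le_of_le (by positivity) hlow (x (k + s)) i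

theorem stmt_15 {n d : ℕ} (P : Matrix (Fin n) (Fin n) ℝ)
    (hnonneg : ∀ i j, 0 ≤ P i j)
    (hcol : ∀ j, ∑ i, P i j = 1)
    (hprim : ∃ k : ℕ, ∀ i j, 0 < (P ^ k) i j)
    (y : ℕ → Fin n → ℝ)
    (hy : ∀ t, y t = (P ^ t) *ᵥ (fun _ => (1 : ℝ)))
    (hypos : ∀ t i, 0 < y t i)
    (Q : ℕ → Matrix (Fin n) (Fin n) ℝ)
    (hQ : ∀ t, Q t = Matrix.diagonal (fun i => (y (t + 1) i)⁻¹) * P * Matrix.diagonal (y t))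
    (α : ℕ → ℝ) (hαnonneg : ∀ t, 0 ≤ α t)
    (hαlim : Tendsto α atTop (nhds 0))
    (L : ℝ) (hL : 0 ≤ L)
    (x : ℕ → Fin n → EuclideanSpace ℝ (Fin d))
    (ε : ℕ → Fin n → EuclideanSpace ℝ (Fin d))
    (hεbound : ∀ t i, ‖ε t i‖ ≤ α t * L / y (t + 1) i)
    (hupdate : ∀ t i, x (t + 1) i = (∑ j, Q t i j • x t j) + ε t i) :
    ∀ i, Tendsto (fun t => ‖x t i - (n : ℝ)⁻¹ • ∑ j, x t j‖) atTop (nhds 0) :=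
  stmt_15_general P hnonneg hcol hprim y hy hypos Q hQ α hαlim L x ε hεbound hupdate
end
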